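/- arXiv:1305.6158 — 6 statements merged into one kernel-verified Lean document; each statement's English description precedes it below -/
import Mathlib

section
/- Let n ≥ 1 and let σ be a simplex in ℝ^n with vertex set V(σ), and let λ : V(σ) → ext(◇^n) be any label function. Then the convex hull conv{λ(v) : v ∈ V(σ)} intersects the interior of ◇^n if and only if σ contains a complementary edge, i.e. there exist vertices v₁, v₂ ∈ V(σ) with λ(v₁) = −λ(v₂). -/
open scoped Classical

/-- The `n`-dimensional octahedron `◇ⁿ`: the unit ball of the `ℓ¹` norm in `ℝⁿ`. -/
def octa (n : ℕ) : Set (Fin n → ℝ) := {x | ∑ i, |x i| ≤ 1}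

/-- The extreme points of the `n`-dimensional octahedron: `{±e₁, …, ±eₙ}`. -/
def extOcta (n : ℕ) : Set (Fin n → ℝ) :=
  {v | ∃ i : Fin n, v = Pi.single i 1 ∨ v = -Pi.single i 1}

lemma ball_subset_octa (n : ℕ) (hn : 1 ≤ n) :
    Metric.ball (0 : Fin n → ℝ) (1 / n) ⊆ octa n := by
  intro x hx
  simp only [Metric.mem_ball, dist_zero_right] at hx
  have h1 : ∑ i, |x i| ≤ ∑ _i : Fin n, ‖x‖ := by
    apply Finset.sum_le_sum
    intro i _
    simpa using norm_le_pi_norm x i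
  simp only [Finset.sum_const, Finset.card_univ, Fintype.card_fin, nsmul_eq_mul] at h1
  have hnpos : (0 : ℝ) < n := by exact_mod_cast hn
  have : (n : ℝ) * ‖x‖ < n * (1 / n) := by
    apply mul_lt_mul_of_pos_left hx hnpos
  rw [mul_one_div_cancel (ne_of_gt hnpos)] at this
  exact le_of_lt (lt_of_le_of_lt h1 this)

/-- Let `σ` be a simplex in `ℝⁿ` (given by its affinely independent,
nonempty vertex set `s`) and let `lab` assign to each vertex an extreme point of the
octahedron `◇ⁿ`.  Then the convex hull of the labels intersects the interior of `◇ⁿ`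
iff `σ` contains a complementary edge, i.e. two vertices with opposite labels. -/
theorem convexHull_labels_inter_interior_octa_iff_complementary_edge
    (n : ℕ) (hn : 1 ≤ n) (s : Finset (Fin n → ℝ)) (hne : s.Nonempty)
    (hindep : AffineIndependent ℝ ((↑) : ↥s → (Fin n → ℝ)))
    (lab : (Fin n → ℝ) → (Fin n → ℝ))
    (hlab : ∀ v ∈ s, lab v ∈ extOcta n) :
    (convexHull ℝ (lab '' (s : Set (Fin n → ℝ))) ∩ interior (octa n)).Nonempty ↔
      ∃ v₁ ∈ s, ∃ v₂ ∈ s, lab v₁ = -lab v₂ := by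
  constructor
  · rintro ⟨x, hxc, hxi⟩
    by_contra hno
    push_neg at hno
    -- sign function
    set ε : Fin n → ℝ := fun i => if Pi.single i 1 ∈ lab '' (s : Set (Fin n → ℝ)) then 1 else -1 with hε
    have hεabs : ∀ i, |ε i| = 1 := by
      intro i; simp only [hε]; split_ifs <;> norm_num
    -- linear functional
    set f : (Fin n → ℝ) →ₗ[ℝ] ℝ :=
      { toFun := fun y => ∑ i, ε i * y i
        map_add' := by intro a b; simp [mul_add, Finset.sum_add_distrib]
        map_smul' := by intro c a; simp [Finset.mul_sum, mul_left_comm] } with hf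
    have hfsingle : ∀ (i : Fin n) (c : ℝ), f (Pi.single i c) = ε i * c := by
      intro i c
      simp only [hf, LinearMap.coe_mk, AddHom.coe_mk]
      rw [Finset.sum_eq_single i]
      · simp
      · intro j _ hj; simp [Pi.single_eq_of_ne hj]
      · simp
    -- f = 1 on labels
    have hfone : ∀ y ∈ lab '' (s : Set (Fin n → ℝ)), f y = 1 := by
      rintro y ⟨v, hv, rfl⟩
      obtain ⟨i, hcase⟩ := hlab v hv
      rcases hcase with h1 | h2
      · have hmem : Pi.single i 1 ∈ lab '' (s : Set (Fin n → ℝ)) := ⟨v, hv, h1⟩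
        rw [h1, hfsingle, mul_one]
        simp only [hε]
        rw [if_pos hmem]
      · have hmem : Pi.single i 1 ∉ lab '' (s : Set (Fin n → ℝ)) := by
          rintro ⟨w, hw, hwlab⟩
          exact hno v hv w hw (by rw [h2, hwlab])
        rw [h2, map_neg, hfsingle, mul_one]
        simp only [hε]
        rw [if_neg hmem]
        norm_num
    -- hence f = 1 on the hull
    have hhull : convexHull ℝ (lab '' (s : Set (Fin n → ℝ))) ⊆ {y | f y = 1} := by
      apply convexHull_min
      · exact hfone
      · exact convex_hyperplane f.isLinear 1
    have hfx : f x = 1 := hhull hxc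
    -- f y ≤ 1 on octa
    have hfle : ∀ y ∈ octa n, f y ≤ 1 := by
      intro y hy
      calc f y = ∑ i, ε i * y i := rfl
        _ ≤ ∑ i, |y i| := by
            apply Finset.sum_le_sum
            intro i _
            calc ε i * y i ≤ |ε i * y i| := le_abs_self _
              _ = |y i| := by rw [abs_mul, hεabs i, one_mul]
        _ ≤ 1 := hy
    -- get a ball around x
    obtain ⟨r, hr, hball⟩ := Metric.isOpen_iff.mp isOpen_interior x hxi
    have hεnorm : ‖ε‖ ≤ 1 := by
      apply pi_norm_le_iff_of_nonneg zero_le_one |>.mpr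
      intro i
      simp [Real.norm_eq_abs, hεabs i]
    set t : ℝ := r / 2 with ht
    have htpos : 0 < t := by positivity
    have hz : x + t • ε ∈ octa n := by
      apply interior_subset
      apply hball
      simp only [Metric.mem_ball, dist_eq_norm, add_sub_cancel_left]
      calc ‖t • ε‖ = |t| * ‖ε‖ := by rw [norm_smul, Real.norm_eq_abs]
        _ ≤ |t| * 1 := by apply mul_le_mul_of_nonneg_left hεnorm (abs_nonneg t)
        _ = t := by rw [mul_one, abs_of_pos htpos]
        _ < r := by rw [ht]; linarith
    have hfε : f ε = n := by
      simp only [hf, LinearMap.coe_mk, AddHom.coe_mk]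
      have : ∀ i : Fin n, ε i * ε i = 1 := by
        intro i
        have := hεabs i
        have h2 : (ε i) ^ 2 = 1 := by rw [← sq_abs, this]; norm_num
        nlinarith [h2]
      simp [this]
    have := hfle _ hz
    rw [map_add, hfx, map_smul, hfε, smul_eq_mul] at this
    have hnpos : (0 : ℝ) < n := by exact_mod_cast hn
    nlinarith
  · rintro ⟨v₁, hv₁, v₂, hv₂, hlab12⟩
    refine ⟨0, ?_, ?_⟩
    · have h1 : lab v₁ ∈ convexHull ℝ (lab '' (s : Set (Fin n → ℝ))) :=
        subset_convexHull ℝ _ ⟨v₁, hv₁, rfl⟩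
      have h2 : lab v₂ ∈ convexHull ℝ (lab '' (s : Set (Fin n → ℝ))) :=
        subset_convexHull ℝ _ ⟨v₂, hv₂, rfl⟩
      have := (convex_convexHull ℝ (lab '' (s : Set (Fin n → ℝ)))) h1 h2
        (by norm_num : (0:ℝ) ≤ 1/2) (by norm_num : (0:ℝ) ≤ 1/2) (by norm_num)
      convert this using 1
      rw [hlab12]
      module
    · apply mem_interior.mpr
      exact ⟨Metric.ball 0 (1 / n), ball_subset_octa n hn, Metric.isOpen_ball,
        Metric.mem_ball_self (by positivity)⟩
end

section
/- Let n ≥ 1 and let σ be a simplex in ℝ^n with vertex set V(σ), and let λ : V(σ) → ext(□^n) be any label function. Then the convex hull conv{λ(v) : v ∈ V(σ)} intersects the interior of □^n if and only if σ is a neutral simplex, i.e. for every i ∈ {1,…,n} there exist vertices v₁, v₂ ∈ V(σ) with λ(v₁)_i = −1 and λ(v₂)_i = +1. -/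
open scoped Classical

/-- The `n`-dimensional cube `□ⁿ = [−1,1]ⁿ`: the unit ball of the `ℓ∞` norm in `ℝⁿ`. -/
def cube (n : ℕ) : Set (Fin n → ℝ) := {x | ∀ i, |x i| ≤ 1}

/-- The extreme points of the `n`-dimensional cube: `{−1,1}ⁿ`. -/
def extCube (n : ℕ) : Set (Fin n → ℝ) := {v | ∀ i, v i = 1 ∨ v i = -1}

/-- Let `σ` be a simplex in `ℝⁿ` (given by its affinely independent,
nonempty vertex set `s`) and let `lab` assign to each vertex an extreme point of the
cube `□ⁿ`.  Then the convex hull of the labels intersects the interior of `□ⁿ` iff `σ`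
is a neutral simplex: for every coordinate `i` some vertex label has `i`-th coordinate
`−1` and some vertex label has `i`-th coordinate `+1`. -/
theorem convexHull_labels_inter_interior_cube_iff_neutral
    (n : ℕ) (hn : 1 ≤ n) (s : Finset (Fin n → ℝ)) (hne : s.Nonempty)
    (hindep : AffineIndependent ℝ ((↑) : ↥s → (Fin n → ℝ)))
    (lab : (Fin n → ℝ) → (Fin n → ℝ))
    (hlab : ∀ v ∈ s, lab v ∈ extCube n) :
    (convexHull ℝ (lab '' (s : Set (Fin n → ℝ))) ∩ interior (cube n)).Nonempty ↔
      ∀ i : Fin n, (∃ v₁ ∈ s, lab v₁ i = -1) ∧ (∃ v₂ ∈ s, lab v₂ i = 1) := by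
  constructor
  · rintro ⟨x, hxhull, hxint⟩ i
    by_contra hcon
    push_neg at hcon
    -- there is c = ±1 with all labels' i-th coordinate equal to c
    obtain ⟨c, hc1, hc⟩ : ∃ c : ℝ, |c| = 1 ∧ ∀ v ∈ s, lab v i = c := by
      by_cases h1 : ∃ v ∈ s, lab v i = -1
      · refine ⟨-1, by norm_num, fun v hv => ?_⟩
        rcases hlab v hv i with h | h
        · exact absurd h (hcon h1 v hv)
        · exact h
      · push_neg at h1
        refine ⟨1, by norm_num, fun v hv => ?_⟩
        rcases hlab v hv i with h | h
        · exact h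
        · exact absurd h (h1 v hv)
    -- the hull lies in the hyperplane {y | y i = c}
    have hsub : convexHull ℝ (lab '' (s : Set (Fin n → ℝ))) ⊆ {y : Fin n → ℝ | y i = c} := by
      apply convexHull_min
      · rintro _ ⟨v, hv, rfl⟩; exact hc v hv
      · intro y hy z hz a b _ _ hab
        simp only [Set.mem_setOf_eq] at hy hz ⊢
        simp [hy, hz, ← add_mul, hab]
    have hxi : x i = c := hsub hxhull
    -- but an interior point can be perturbed in the i-th coordinate
    rw [mem_interior_iff_mem_nhds, Metric.mem_nhds_iff] at hxint
    obtain ⟨ε, hε, hball⟩ := hxint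
    set x' := Function.update x i (x i + c * (ε / 2)) with hx'def
    have hx' : x' ∈ Metric.ball x ε := by
      rw [Metric.mem_ball, dist_pi_lt_iff hε]
      intro b
      by_cases hb : b = i
      · subst hb
        simp only [hx'def, Function.update_self, Real.dist_eq]
        rw [add_sub_cancel_left, abs_mul, hc1, one_mul]
        rw [abs_of_pos (by linarith)]
        linarith
      · simp [hx'def, Function.update_of_ne hb, hε]
    have hle : |x' i| ≤ 1 := hball hx' i
    have : x' i = c * (1 + ε / 2) := by
      simp only [hx'def, Function.update_self, hxi]; ring
    rw [this, abs_mul, hc1, one_mul, abs_of_pos (by linarith)] at hle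
    linarith
  · intro hneutral
    have hcard : (0 : ℝ) < s.card := by
      exact_mod_cast Finset.card_pos.mpr hne
    -- the centroid of the labels
    refine ⟨(s.card : ℝ)⁻¹ • ∑ v ∈ s, lab v, ?_, ?_⟩
    · have hmem := s.centerMass_mem_convexHull (w := fun _ => (1 : ℝ))
        (fun v _ => zero_le_one) (by simpa using hcard)
        (fun v hv => Set.mem_image_of_mem lab hv)
      simpa [Finset.centerMass, Finset.sum_const, nsmul_eq_mul] using hmem
    · -- it lies in the open cube, which is contained in the interior
      have hUopen : IsOpen {y : Fin n → ℝ | ∀ j, |y j| < 1} := by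
        have : {y : Fin n → ℝ | ∀ j, |y j| < 1}
            = ⋂ j, (fun y : Fin n → ℝ => y j) ⁻¹' Metric.ball (0 : ℝ) 1 := by
          ext y
          simp [Real.dist_eq]
        rw [this]
        exact isOpen_iInter_of_finite fun j =>
          (Metric.isOpen_ball).preimage (continuous_apply j)
      have hUsub : {y : Fin n → ℝ | ∀ j, |y j| < 1} ⊆ cube n :=
        fun y hy j => le_of_lt (hy j)
      apply interior_maximal hUsub hUopen
      intro j
      obtain ⟨⟨v₁, hv₁, hv₁'⟩, ⟨v₂, hv₂, hv₂'⟩⟩ := hneutral j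
      have hub : ∑ v ∈ s, lab v j < s.card := by
        have h := Finset.sum_lt_sum (f := fun v => lab v j) (g := fun _ => (1 : ℝ))
          (fun v hv => by rcases hlab v hv j with h | h <;> simp [h])
          ⟨v₁, hv₁, by simp [hv₁']⟩
        simpa using h
      have hlb : -(s.card : ℝ) < ∑ v ∈ s, lab v j := by
        have h := Finset.sum_lt_sum (f := fun _ => (-1 : ℝ)) (g := fun v => lab v j)
          (fun v hv => by rcases hlab v hv j with h | h <;> simp [h])
          ⟨v₂, hv₂, by simp [hv₂']⟩
        simpa using h
      show |((s.card : ℝ)⁻¹ • ∑ v ∈ s, lab v) j| < 1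
      have hinv : (0 : ℝ) < (s.card : ℝ)⁻¹ := inv_pos.mpr hcard
      have hci : (s.card : ℝ)⁻¹ * s.card = 1 := inv_mul_cancel₀ hcard.ne'
      simp only [Pi.smul_apply, Finset.sum_apply, smul_eq_mul]
      rw [abs_lt]
      constructor
      · nlinarith [mul_lt_mul_of_pos_left hlb hinv]
      · nlinarith [mul_lt_mul_of_pos_left hub hinv]
end

section
/- (Cubical Sperner with Cubical Labels.) Let n ≥ 1, let T be a triangulation of □^n, and let λ : V(T) → ext(□^n) be a label function such that for every vertex x = (x_1,…,x_n) ∈ V(T) and every 1 ≤ i ≤ n, if x_i ∈ {−1,1} then λ(x)_i = x_i. Then T contains a neutral simplex, i.e. a simplex σ ∈ T such that for every i ∈ {1,…,n} there exist vertices v₁, v₂ of σ with λ(v₁)_i = −1 and λ(v₂)_i = +1. -/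
/-!
If no simplex were neutral, every face of `K` would carry, in some coordinate `i`, the constant
label `-1` or the constant label `+1`. The union `Aᵢ⁻` (resp. `Aᵢ⁺`) of the faces with constant
`i`-th label `-1` (resp. `+1`) is closed, `Aᵢ⁻` and `Aᵢ⁺` are disjoint because two faces meet in a
common face, and by the boundary condition they contain the facets `xᵢ = -1` and `xᵢ = 1` of the
cube. The Poincaré–Miranda theorem, applied to `x ↦ (d(x, Aᵢ⁻) - d(x, Aᵢ⁺))ᵢ`, yields a point of
the cube outside all the `Aᵢ^±`; but every point lies in some face, hence in some `Aᵢ^±`.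

Poincaré–Miranda is derived from Kuhn's cubical Sperner lemma: the grid `{0, …, N}ⁿ` is
triangulated by the simplices with vertices `b, b + e_{σ 0}, …, b + e_{σ 0} + ⋯ + e_{σ (n-1)}`,
and a pivoting ("doors and rooms") parity argument, by induction on `n`, shows that an odd number
of them are fully labelled. With the labels read off from the signs of `f`, a fully labelled
simplex of mesh `2 / N` is a near-zero of `f`, and compactness of the cube finishes the proof.
-/

open scoped Classical

open Finset

theorem card_filter_fixed_modEq_two {α : Type*} [DecidableEq α] (s : Finset α) (f : α → α)
    (hmaps : ∀ x ∈ s, f x ∈ s) (hinv : ∀ x ∈ s, f (f x) = x) :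
    #{x ∈ s | f x = x} ≡ #s [MOD 2] := by
  have hmoved : ((#{x ∈ s | f x ≠ x} : ℕ) : ZMod 2) = 0 := by
    rw [card_eq_sum_ones, Nat.cast_sum, Nat.cast_one]
    refine sum_involution (fun x _ => f x) (fun _ _ => by decide)
      (fun x hx _ => (mem_filter.1 hx).2) (fun x hx => ?_) (fun x hx => hinv x (mem_filter.1 hx).1)
    obtain ⟨hxs, hfx⟩ := mem_filter.1 hx
    exact mem_filter.2 ⟨hmaps x hxs, fun h => hfx (h.symm.trans (hinv x hxs))⟩
  rw [← ZMod.natCast_eq_natCast_iff, ← card_filter_add_card_filter_not (s := s) (fun x => f x = x),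
    Nat.cast_add, hmoved, add_zero]

section Doors

/- The vertices `0, …, n` of a single simplex carry the labels `g 0, …, g n ≤ n`; `k` is a door
when the facet opposite vertex `k` carries every label `< n`. -/
variable {n : ℕ} (g : ℕ → ℕ)

theorem injOn_range_of_forall_exists_eq (hg : ∀ k ≤ n, g k ≤ n)
    (hsurj : ∀ m ≤ n, ∃ k ≤ n, g k = m) :
    Set.InjOn g (range (n + 1)) := by
  have himage : (range (n + 1)).image g = range (n + 1) := by
    refine (image_subset_iff.2 fun k hk => ?_).antisymm fun m hm => ?_
    · simpa [Nat.lt_succ_iff] using hg k (by simpa [Nat.lt_succ_iff] using hk)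
    · obtain ⟨k, hk, rfl⟩ := hsurj m (by simpa [Nat.lt_succ_iff] using hm)
      exact mem_image_of_mem g (by simpa [Nat.lt_succ_iff] using hk)
  exact card_image_iff.1 (by rw [himage])

theorem exists_doors_eq_singleton (hg : ∀ k ≤ n, g k ≤ n)
    (hsurj : ∀ m ≤ n, ∃ k ≤ n, g k = m) :
    ∃ k₁, {k ∈ range (n + 1) | ∀ m < n, ∃ j ≤ n, j ≠ k ∧ g j = m} = {k₁} := by
  have hinj := injOn_range_of_forall_exists_eq g hg hsurj
  have mem : ∀ {k}, k ≤ n → k ∈ (range (n + 1) : Set ℕ) := fun hk =>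
    mem_coe.2 (mem_range.2 (Nat.lt_succ_of_le hk))
  obtain ⟨k₁, hk₁, hgk₁⟩ := hsurj n le_rfl
  refine ⟨k₁, ext fun k => ?_⟩
  simp only [mem_filter, mem_range, mem_singleton, Nat.lt_succ_iff]
  constructor
  · rintro ⟨hk, hdoor⟩
    by_contra hne
    have hlt : g k < n :=
      (hg k hk).lt_of_ne fun h => hne (hinj (mem hk) (mem hk₁) (h.trans hgk₁.symm))
    obtain ⟨j, hj, hjk, hgj⟩ := hdoor (g k) hlt
    exact hjk (hinj (mem hj) (mem hk) hgj)
  · rintro rfl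
    refine ⟨hk₁, fun m hm => ?_⟩
    obtain ⟨j, hj, hgj⟩ := hsurj m hm.le
    exact ⟨j, hj, by rintro rfl; omega, hgj⟩

theorem exists_doors_eq_pair (hg : ∀ k ≤ n, g k ≤ n) (hsurj : ¬ ∀ m ≤ n, ∃ k ≤ n, g k = m)
    {k₀ : ℕ} (hk₀ : k₀ ≤ n) (hdoor₀ : ∀ m < n, ∃ j ≤ n, j ≠ k₀ ∧ g j = m) :
    ∃ j₀, j₀ ≠ k₀ ∧
      {k ∈ range (n + 1) | ∀ m < n, ∃ j ≤ n, j ≠ k ∧ g j = m} = {k₀, j₀} := by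
  have hlt : ∀ k ≤ n, g k < n := by
    refine fun k hk => (hg k hk).lt_of_ne fun hkn => hsurj fun m hm => ?_
    rcases hm.lt_or_eq with hm | rfl
    · obtain ⟨j, hj, -, hgj⟩ := hdoor₀ m hm
      exact ⟨j, hj, hgj⟩
    · exact ⟨k, hk, hkn⟩
  set s := (range (n + 1)).erase k₀
  have mem : ∀ {k}, k ≤ n → k ≠ k₀ → k ∈ (s : Set ℕ) := fun hk hne =>
    mem_coe.2 (mem_erase.2 ⟨hne, mem_range.2 (Nat.lt_succ_of_le hk)⟩)
  have hinj : Set.InjOn g s := by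
    have himage : s.image g = range n := by
      refine (image_subset_iff.2 fun k hk => ?_).antisymm fun m hm => ?_
      · simp only [s, mem_erase, mem_range] at hk
        exact mem_range.2 (hlt k (by omega))
      · obtain ⟨j, hj, hjk, rfl⟩ := hdoor₀ m (mem_range.1 hm)
        exact mem_image_of_mem g (mem hj hjk)
    refine card_image_iff.1 ?_
    rw [himage, card_erase_of_mem (mem_range.2 (Nat.lt_succ_of_le hk₀)), card_range, card_range,
      Nat.succ_sub_one]
  obtain ⟨j₀, hj₀, hj₀k₀, hgj₀⟩ := hdoor₀ (g k₀) (hlt k₀ hk₀)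
  refine ⟨j₀, hj₀k₀, ext fun k => ?_⟩
  simp only [mem_filter, mem_range, mem_insert, mem_singleton, Nat.lt_succ_iff]
  constructor
  · rintro ⟨hk, hdoor⟩
    by_contra! hne
    obtain ⟨j, hj, hjk, hgj⟩ := hdoor (g k) (hlt k hk)
    rcases eq_or_ne j k₀ with rfl | hjk₀
    · exact hne.2 (hinj (mem hk hne.1) (mem hj₀ hj₀k₀) (hgj.symm.trans hgj₀.symm))
    · exact hjk (hinj (mem hj hjk₀) (mem hk hne.1) hgj)
  · rintro (rfl | rfl)
    · exact ⟨hk₀, hdoor₀⟩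
    · refine ⟨hj₀, fun m hm => ?_⟩
      obtain ⟨j, hj, hjk₀, rfl⟩ := hdoor₀ m hm
      rcases eq_or_ne j k with rfl | hjk
      · exact ⟨k₀, hk₀, hj₀k₀.symm, hgj₀.symm⟩
      · exact ⟨j, hj, hjk, rfl⟩

theorem card_doors_modEq (hg : ∀ k ≤ n, g k ≤ n) :
    #{k ∈ range (n + 1) | ∀ m < n, ∃ j ≤ n, j ≠ k ∧ g j = m} ≡
      if ∀ m ≤ n, ∃ k ≤ n, g k = m then 1 else 0 [MOD 2] := by
  split_ifs with hsurj
  · obtain ⟨k₁, h⟩ := exists_doors_eq_singleton g hg hsurj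
    rw [h, card_singleton]
  obtain hempty | ⟨k₀, hk₀⟩ := eq_empty_or_nonempty
    {k ∈ range (n + 1) | ∀ m < n, ∃ j ≤ n, j ≠ k ∧ g j = m}
  · rw [hempty, card_empty]
  obtain ⟨hk₀n, hdoor₀⟩ := mem_filter.1 hk₀
  obtain ⟨j₀, hj₀k₀, h⟩ :=
    exists_doors_eq_pair g hg hsurj (Nat.lt_succ_iff.1 (mem_range.1 hk₀n)) hdoor₀
  rw [h, card_pair hj₀k₀.symm]
  rfl

end Doors

section SpernerLabeling

variable {n N : ℕ}

structure IsSpernerLabeling (N : ℕ) (L : (Fin n → ℕ) → ℕ) : Prop where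
  le_dim : ∀ x, (∀ j, x j ≤ N) → L x ≤ n
  ne_of_eq_zero : ∀ x (i : Fin n), (∀ j, x j ≤ N) → x i = 0 → L x ≠ i
  le_of_eq_top : ∀ x (i : Fin n), (∀ j, x j ≤ N) → x i = N → L x ≤ i

theorem snoc_le_of_forall_le {y : Fin n → ℕ} (hy : ∀ j, y j ≤ N) (j : Fin (n + 1)) :
    (Fin.snoc y N : Fin (n + 1) → ℕ) j ≤ N := by
  induction j using Fin.lastCases <;> simp [hy]

theorem IsSpernerLabeling.snoc {L : (Fin (n + 1) → ℕ) → ℕ} (hL : IsSpernerLabeling N L) :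
    IsSpernerLabeling N fun y => L (Fin.snoc y N) where
  le_dim y hy := by
    simpa using hL.le_of_eq_top _ (Fin.last n) (snoc_le_of_forall_le hy) (by simp)
  ne_of_eq_zero y i hy hyi := by
    simpa using hL.ne_of_eq_zero _ i.castSucc (snoc_le_of_forall_le hy) (by simpa using hyi)
  le_of_eq_top y i hy hyi := by
    simpa using hL.le_of_eq_top _ i.castSucc (snoc_le_of_forall_le hy) (by simpa using hyi)

end SpernerLabeling

theorem Fin.neg_one_eq_last {n : ℕ} : (-1 : Fin (n + 1)) = Fin.last n :=
  Fin.ext Fin.coe_neg_one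

/-- `(b, σ)` stands for the simplex of Kuhn's triangulation of the grid `{0, …, N}ⁿ` with
vertices `b + e_{σ 0} + ⋯ + e_{σ (k-1)}`, `k = 0, …, n`. -/
abbrev KuhnCell (n N : ℕ) := (Fin n → Fin N) × Equiv.Perm (Fin n)

namespace KuhnCell

variable {n N : ℕ}

def vertex (c : KuhnCell n N) (k : ℕ) : Fin n → ℕ :=
  fun i => c.1 i + if (c.2⁻¹ i : ℕ) < k then 1 else 0

theorem vertex_le (c : KuhnCell n N) (k : ℕ) (i : Fin n) : vertex c k i ≤ N := by
  have := (c.1 i).isLt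
  unfold vertex
  split <;> omega

theorem vertex_le_vertex_add_one (c : KuhnCell n N) (j k : ℕ) (i : Fin n) :
    vertex c j i ≤ vertex c k i + 1 := by
  unfold vertex
  split <;> split <;> omega

def shiftUp (c : KuhnCell (n + 1) N) (h : (c.1 (c.2 0) : ℕ) + 1 < N) : KuhnCell (n + 1) N :=
  (Function.update c.1 (c.2 0) ⟨c.1 (c.2 0) + 1, h⟩, c.2 * finRotate (n + 1))

def shiftDown (c : KuhnCell (n + 1) N) (h : 0 < (c.1 (c.2 (Fin.last n)) : ℕ)) :
    KuhnCell (n + 1) N :=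
  (Function.update c.1 (c.2 (Fin.last n)) ⟨c.1 (c.2 (Fin.last n)) - 1, by omega⟩,
    c.2 * (finRotate (n + 1))⁻¹)

def swapAdjacent (c : KuhnCell (n + 1) N) (k : ℕ) (hk : k < n + 1) : KuhnCell (n + 1) N :=
  (c.1, c.2 * Equiv.swap ⟨k - 1, by omega⟩ ⟨k, hk⟩)

theorem vertex_shiftUp (c : KuhnCell (n + 1) N) (h : (c.1 (c.2 0) : ℕ) + 1 < N) {j : ℕ}
    (hj : j ≤ n) : vertex (shiftUp c h) j = vertex c (j + 1) := by
  funext i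
  by_cases hi : i = c.2 0
  · subst hi
    simp [vertex, shiftUp, Equiv.Perm.inv_def, not_lt.2 hj]
  · have ht : c.2.symm i ≠ 0 := fun h => hi (by simp [← h])
    have := Fin.val_ne_zero_iff.2 ht
    simp only [vertex, shiftUp, Function.update_of_ne hi, mul_inv_rev, Equiv.Perm.inv_def,
      Equiv.Perm.coe_mul, Function.comp_apply, finRotate_symm_apply,
      Fin.val_sub_one_of_ne_zero ht, Order.lt_add_one_iff, Nat.add_left_cancel_iff]
    split_ifs <;> omega

theorem vertex_shiftDown (c : KuhnCell (n + 1) N) (h : 0 < (c.1 (c.2 (Fin.last n)) : ℕ))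
    {j : ℕ} (hj : j ≤ n) : vertex (shiftDown c h) (j + 1) = vertex c j := by
  funext i
  by_cases hi : i = c.2 (Fin.last n)
  · subst hi
    simp [vertex, shiftDown, Equiv.Perm.inv_def, Nat.sub_add_cancel h, hj]
  · have ht : c.2.symm i ≠ Fin.last n := fun h => hi (by simp [← h])
    simp [vertex, shiftDown, Function.update_of_ne hi, Equiv.Perm.inv_def,
      Fin.val_add_one_of_lt (Fin.lt_last_iff_ne_last.2 ht)]

theorem vertex_swapAdjacent (c : KuhnCell (n + 1) N) {k : ℕ} (hk : k < n + 1) {j : ℕ}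
    (hj : j ≠ k) : vertex (swapAdjacent c k hk) j = vertex c j := by
  funext i
  simp only [vertex, swapAdjacent, mul_inv_rev, Equiv.swap_inv, Equiv.Perm.mul_apply,
    Nat.add_left_cancel_iff]
  rcases eq_or_ne (c.2⁻¹ i) ⟨k - 1, by omega⟩ with h | h
  · simp only [h, Equiv.swap_apply_left]
    split_ifs <;> omega
  rcases eq_or_ne (c.2⁻¹ i) ⟨k, hk⟩ with h' | h'
  · simp only [h', Equiv.swap_apply_right]
    split_ifs <;> omega
  · rw [Equiv.swap_apply_of_ne_of_ne h h']

theorem shiftUp_last_pos (c : KuhnCell (n + 1) N) (h : (c.1 (c.2 0) : ℕ) + 1 < N) :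
    0 < ((shiftUp c h).1 ((shiftUp c h).2 (Fin.last n)) : ℕ) := by
  simp [shiftUp]

theorem shiftDown_shiftUp (c : KuhnCell (n + 1) N) (h : (c.1 (c.2 0) : ℕ) + 1 < N) :
    shiftDown (shiftUp c h) (shiftUp_last_pos c h) = c := by
  ext i <;> simp [shiftUp, shiftDown]

theorem shiftDown_first_lt (c : KuhnCell (n + 1) N) (h : 0 < (c.1 (c.2 (Fin.last n)) : ℕ)) :
    ((shiftDown c h).1 ((shiftDown c h).2 0) : ℕ) + 1 < N := by
  have : (c.1 (c.2 (Fin.last n)) : ℕ) - 1 + 1 < N := by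
    have := (c.1 (c.2 (Fin.last n))).isLt
    omega
  simpa [shiftDown, Equiv.Perm.inv_def, Fin.neg_one_eq_last]

theorem shiftUp_shiftDown (c : KuhnCell (n + 1) N) (h : 0 < (c.1 (c.2 (Fin.last n)) : ℕ)) :
    shiftUp (shiftDown c h) (shiftDown_first_lt c h) = c := by
  have hpred : (c.1 (c.2 (Fin.last n)) : ℕ) - 1 + 1 = c.1 (c.2 (Fin.last n)) := by omega
  ext i <;> simp [shiftUp, shiftDown, Equiv.Perm.inv_def, Fin.neg_one_eq_last, hpred]

theorem swapAdjacent_swapAdjacent (c : KuhnCell (n + 1) N) {k : ℕ} (hk : k < n + 1) :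
    swapAdjacent (swapAdjacent c k hk) k hk = c := by
  simp [swapAdjacent, mul_assoc]

/-- Crossing the facet of `c` opposite its vertex `k` into the neighbouring cell, which sees the
same facet opposite the returned index; a facet on the boundary of the grid is left fixed. -/
def pivot : KuhnCell (n + 1) N × ℕ → KuhnCell (n + 1) N × ℕ
  | (c, k) =>
    if k = 0 then
      if h : (c.1 (c.2 0) : ℕ) + 1 < N then (shiftUp c h, n + 1) else (c, 0)
    else if k = n + 1 then
      if h : 0 < (c.1 (c.2 (Fin.last n)) : ℕ) then (shiftDown c h, 0) else (c, n + 1)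
    else if hk : k < n + 1 then (swapAdjacent c k hk, k) else (c, k)

theorem pivot_pivot (c : KuhnCell (n + 1) N) {k : ℕ} (hk : k ≤ n + 1) :
    pivot (pivot (c, k)) = (c, k) := by
  rcases eq_or_ne k 0 with rfl | h0
  · by_cases h : (c.1 (c.2 0) : ℕ) + 1 < N
    · simp [pivot, h, shiftUp_last_pos, shiftDown_shiftUp]
    · simp [pivot, h]
  rcases eq_or_ne k (n + 1) with rfl | h1
  · by_cases h : 0 < (c.1 (c.2 (Fin.last n)) : ℕ)
    · simp [pivot, h, shiftDown_first_lt, shiftUp_shiftDown]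
    · simp [pivot, h]
  · simp [pivot, h0, h1, show k < n + 1 by omega, swapAdjacent_swapAdjacent]

theorem pivot_snd_le (c : KuhnCell (n + 1) N) {k : ℕ} (hk : k ≤ n + 1) :
    (pivot (c, k)).2 ≤ n + 1 := by
  dsimp only [pivot]
  split_ifs <;> simp [hk]

def IsRainbow (L : (Fin n → ℕ) → ℕ) (c : KuhnCell n N) : Prop :=
  ∀ m ≤ n, ∃ k ≤ n, L (vertex c k) = m

/-- The facet of `c` opposite its vertex `k` carries every label `< n`. -/
def IsDoor (L : (Fin n → ℕ) → ℕ) (c : KuhnCell n N) (k : ℕ) : Prop :=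
  ∀ m < n, ∃ j ≤ n, j ≠ k ∧ L (vertex c j) = m

theorem isDoor_pivot (L : (Fin (n + 1) → ℕ) → ℕ) (c : KuhnCell (n + 1) N) {k : ℕ}
    (hk : k ≤ n + 1) (hdoor : IsDoor L c k) : IsDoor L (pivot (c, k)).1 (pivot (c, k)).2 := by
  rcases eq_or_ne k 0 with rfl | h0
  · by_cases h : (c.1 (c.2 0) : ℕ) + 1 < N
    · simp only [pivot, if_true, dif_pos h]
      intro m hm
      obtain ⟨j, hj, hj0, hLj⟩ := hdoor m hm
      refine ⟨j - 1, by omega, by omega, ?_⟩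
      rwa [vertex_shiftUp c h (by omega), Nat.sub_add_cancel (by omega)]
    · simpa [pivot, h] using hdoor
  rcases eq_or_ne k (n + 1) with rfl | h1
  · by_cases h : 0 < (c.1 (c.2 (Fin.last n)) : ℕ)
    · simp only [pivot, h0, if_false, if_true, dif_pos h]
      intro m hm
      obtain ⟨j, hj, hjn, hLj⟩ := hdoor m hm
      exact ⟨j + 1, by omega, by omega, by rwa [vertex_shiftDown c h (by omega)]⟩
    · simpa [pivot, h] using hdoor
  · have hk' : k < n + 1 := by omega
    simp only [pivot, h0, h1, if_false, dif_pos hk']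
    intro m hm
    obtain ⟨j, hj, hjk, hLj⟩ := hdoor m hm
    exact ⟨j, hj, hjk, by rwa [vertex_swapAdjacent c hk' hjk]⟩

/-- Sperner's condition rules out every door on the boundary of the grid except those in the
top face `x_last = N`. -/
theorem IsDoor.top_of_pivot_eq_self {L : (Fin (n + 1) → ℕ) → ℕ} {c : KuhnCell (n + 1) N} {k : ℕ}
    (hdoor : IsDoor L c k) (hL : IsSpernerLabeling N L) (hk : k ≤ n + 1)
    (hfix : pivot (c, k) = (c, k)) :
    k = 0 ∧ (c.1 (c.2 0) : ℕ) + 1 = N ∧ c.2 0 = Fin.last n := by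
  rcases eq_or_ne k 0 with rfl | h0
  · by_cases h : (c.1 (c.2 0) : ℕ) + 1 < N
    · simp [pivot, h] at hfix
    have htop : (c.1 (c.2 0) : ℕ) + 1 = N := by have := (c.1 (c.2 0)).isLt; omega
    obtain ⟨j, hj, hj0, hLj⟩ := hdoor n (by omega)
    have hle := hL.le_of_eq_top (vertex c j) (c.2 0) (vertex_le c j)
      (by simp [vertex, Nat.pos_of_ne_zero hj0, htop])
    exact ⟨rfl, htop, Fin.ext (by rw [Fin.val_last]; omega)⟩
  exfalso
  rcases eq_or_ne k (n + 1) with rfl | h1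
  · by_cases h : 0 < (c.1 (c.2 (Fin.last n)) : ℕ)
    · simp [pivot, h] at hfix
    obtain ⟨j, hj, hjn, hLj⟩ := hdoor (c.2 (Fin.last n)) (c.2 (Fin.last n)).isLt
    exact hL.ne_of_eq_zero (vertex c j) (c.2 (Fin.last n)) (vertex_le c j)
      (by simp [vertex, Nat.eq_zero_of_not_pos h, not_lt.2 (show j ≤ n by omega)]) hLj
  · have hk' : k < n + 1 := by omega
    simp only [pivot, h0, h1, if_false, dif_pos hk', Prod.mk.injEq, and_true, swapAdjacent] at hfix
    have := congrArg Prod.snd hfix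
    rw [mul_eq_left, Equiv.swap_eq_one_iff, Fin.mk.injEq] at this
    omega

def liftPerm (σ : Equiv.Perm (Fin n)) : Equiv.Perm (Fin (n + 1)) :=
  (finRotate (n + 1)).symm * Equiv.Perm.decomposeFin.symm (0, σ)

theorem liftPerm_zero (σ : Equiv.Perm (Fin n)) : liftPerm σ 0 = Fin.last n := by
  simp [liftPerm, Fin.neg_one_eq_last]

theorem liftPerm_succ (σ : Equiv.Perm (Fin n)) (j : Fin n) :
    liftPerm σ j.succ = (σ j).castSucc := by
  simp [liftPerm, Fin.ext_iff, Fin.val_sub_one_of_ne_zero (Fin.succ_ne_zero _)]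

theorem liftPerm_inv_last (σ : Equiv.Perm (Fin n)) : (liftPerm σ)⁻¹ (Fin.last n) = 0 := by
  rw [Equiv.Perm.inv_eq_iff_eq, liftPerm_zero]

theorem liftPerm_inv_castSucc (σ : Equiv.Perm (Fin n)) (i : Fin n) :
    (liftPerm σ)⁻¹ i.castSucc = (σ⁻¹ i).succ := by
  rw [Equiv.Perm.inv_eq_iff_eq, liftPerm_succ]
  simp

theorem liftPerm_injective : Function.Injective (liftPerm (n := n)) := fun σ τ h =>
  Equiv.ext fun j => Fin.castSucc_injective n (by rw [← liftPerm_succ, ← liftPerm_succ, h])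

theorem exists_liftPerm_eq {π : Equiv.Perm (Fin (n + 1))} (hπ : π 0 = Fin.last n) :
    ∃ σ, liftPerm σ = π := by
  rcases hdecomp : Equiv.Perm.decomposeFin (finRotate (n + 1) * π) with ⟨p, σ⟩
  have hsymm : Equiv.Perm.decomposeFin.symm (p, σ) = finRotate (n + 1) * π := by
    rw [← hdecomp, Equiv.symm_apply_apply]
  have hp : p = 0 := by simpa [hπ, finRotate_last] using congrArg (· 0) hsymm
  subst hp
  exact ⟨σ, by rw [liftPerm, hsymm, ← mul_assoc, ← Equiv.Perm.inv_def, inv_mul_cancel, one_mul]⟩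

def extendCell (hN : 0 < N) (b : KuhnCell n N) : KuhnCell (n + 1) N :=
  (Fin.snoc b.1 ⟨N - 1, by omega⟩, liftPerm b.2)

theorem vertex_extendCell (hN : 0 < N) (b : KuhnCell n N) (k : ℕ) :
    vertex (extendCell hN b) (k + 1) = Fin.snoc (vertex b k) N := by
  funext i
  induction i using Fin.lastCases with
  | last => simp [vertex, extendCell, liftPerm_inv_last, Nat.sub_add_cancel hN]
  | cast i => simp [vertex, extendCell, liftPerm_inv_castSucc]

theorem extendCell_injective (hN : 0 < N) : Function.Injective (extendCell (n := n) hN) := by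
  intro b b' h
  simp only [extendCell, Prod.mk.injEq] at h
  exact Prod.ext (funext fun j => by simpa using congrFun h.1 j.castSucc) (liftPerm_injective h.2)

theorem exists_extendCell_eq (hN : 0 < N) {c : KuhnCell (n + 1) N}
    (hlast : c.2 0 = Fin.last n) (htop : (c.1 (Fin.last n) : ℕ) + 1 = N) :
    ∃ b, extendCell hN b = c := by
  obtain ⟨σ, hσ⟩ := exists_liftPerm_eq hlast
  refine ⟨(Fin.init c.1, σ), Prod.ext (funext fun i => ?_) hσ⟩
  induction i using Fin.lastCases with
  | last => ext; simp [extendCell, ← htop]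
  | cast i => simp [extendCell, Fin.init]

theorem pivot_extendCell (hN : 0 < N) (b : KuhnCell n N) :
    pivot (extendCell hN b, 0) = (extendCell hN b, 0) := by
  have htop : ¬ ((extendCell hN b).1 ((extendCell hN b).2 0) : ℕ) + 1 < N := by
    simp [extendCell, liftPerm_zero, Nat.sub_add_cancel hN]
  simp only [pivot, if_true, dif_neg htop]

theorem isDoor_extendCell_iff (hN : 0 < N) (L : (Fin (n + 1) → ℕ) → ℕ) (b : KuhnCell n N) :
    IsDoor L (extendCell hN b) 0 ↔ IsRainbow (fun y => L (Fin.snoc y N)) b := by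
  refine ⟨fun h m hm => ?_, fun h m hm => ?_⟩
  · obtain ⟨j, hj, hj0, hLj⟩ := h m (by omega)
    refine ⟨j - 1, by omega, ?_⟩
    dsimp only
    rwa [← vertex_extendCell, Nat.sub_add_cancel (by omega)]
  · obtain ⟨k, hk, hLk⟩ := h m (by omega)
    exact ⟨k + 1, by omega, by omega, by rwa [vertex_extendCell]⟩

noncomputable def doors (N : ℕ) (L : (Fin n → ℕ) → ℕ) : Finset (KuhnCell n N × ℕ) :=
  {p ∈ univ ×ˢ range (n + 1) | IsDoor L p.1 p.2}

theorem card_doors_modEq_card_isRainbow {L : (Fin n → ℕ) → ℕ} (hL : IsSpernerLabeling N L) :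
    #(doors N L) ≡ #{c : KuhnCell n N | IsRainbow L c} [MOD 2] := by
  rw [doors, card_filter, sum_product, card_filter]
  refine Nat.ModEq.sum fun c _ => ?_
  rw [← card_filter]
  convert card_doors_modEq (fun k => L (vertex c k)) fun k _ => hL.le_dim _ (vertex_le c k) <;>
    exact Iff.rfl

theorem pivot_mem_doors {L : (Fin (n + 1) → ℕ) → ℕ} {p : KuhnCell (n + 1) N × ℕ}
    (hp : p ∈ doors N L) : pivot p ∈ doors N L := by
  obtain ⟨c, k⟩ := p
  simp only [doors, mem_filter, mem_product, mem_univ, mem_range, true_and] at hp ⊢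
  exact ⟨Nat.lt_succ_of_le (pivot_snd_le c (by omega)), isDoor_pivot L c (by omega) hp.2⟩

theorem pivot_pivot_of_mem_doors {L : (Fin (n + 1) → ℕ) → ℕ} {p : KuhnCell (n + 1) N × ℕ}
    (hp : p ∈ doors N L) : pivot (pivot p) = p := by
  obtain ⟨c, k⟩ := p
  simp only [doors, mem_filter, mem_product, mem_univ, mem_range, true_and] at hp
  exact pivot_pivot c (by omega)

theorem card_fixed_doors (hN : 0 < N) {L : (Fin (n + 1) → ℕ) → ℕ} (hL : IsSpernerLabeling N L) :
    #{p ∈ doors N L | pivot p = p} =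
      #{b : KuhnCell n N | IsRainbow (fun y => L (Fin.snoc y N)) b} := by
  symm
  refine card_nbij (fun b => (extendCell hN b, 0)) (fun b hb => ?_) ?_ fun p hp => ?_
  · simp only [coe_filter, mem_univ, true_and, Set.mem_ofPred_eq] at hb
    simpa [doors, pivot_extendCell, isDoor_extendCell_iff] using hb
  · exact fun b _ b' _ h => extendCell_injective hN (congrArg Prod.fst h)
  · obtain ⟨c, k⟩ := p
    simp only [coe_filter, Set.mem_ofPred_eq, doors, mem_filter, mem_product, mem_univ,
      mem_range, true_and] at hp
    obtain ⟨rfl, htop, hlast⟩ := hp.1.2.top_of_pivot_eq_self hL (by omega) hp.2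
    obtain ⟨b, rfl⟩ := exists_extendCell_eq hN hlast (hlast ▸ htop)
    exact ⟨b, by simpa [isDoor_extendCell_iff] using hp.1.2, rfl⟩

theorem odd_card_isRainbow (hN : 0 < N) {L : (Fin n → ℕ) → ℕ} (hL : IsSpernerLabeling N L) :
    Odd #{c : KuhnCell n N | IsRainbow L c} := by
  induction n with
  | zero =>
    have hall : ∀ c : KuhnCell 0 N, IsRainbow L c := fun c m hm =>
      ⟨0, le_rfl, by have := hL.le_dim (vertex c 0) (vertex_le c 0); omega⟩
    simp [filter_true_of_mem fun c _ => hall c]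
  | succ n ih =>
    -- rainbow cells ≡ doors ≡ doors fixed by `pivot` = rainbow cells of the top face (mod 2)
    have hcount := (card_doors_modEq_card_isRainbow hL).symm.trans
      ((card_filter_fixed_modEq_two _ pivot (fun _ => pivot_mem_doors)
        (fun _ => pivot_pivot_of_mem_doors)).symm)
    rw [card_fixed_doors hN hL] at hcount
    rw [Nat.odd_iff, hcount, ← Nat.odd_iff]
    exact ih hL.snoc

end KuhnCell

theorem cube_eq_closedBall (n : ℕ) : cube n = Metric.closedBall 0 1 := by
  ext x
  rw [mem_closedBall_zero_iff, pi_norm_le_iff_of_nonneg zero_le_one]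
  simp [cube]

theorem isCompact_cube (n : ℕ) : IsCompact (cube n) := by
  rw [cube_eq_closedBall]
  exact isCompact_closedBall 0 1

section Grid

variable {n : ℕ}

noncomputable def gridPoint (N : ℕ) (x : Fin n → ℕ) : Fin n → ℝ :=
  fun i => 2 * x i / N - 1

theorem gridPoint_mem_cube {N : ℕ} (hN : 0 < N) {x : Fin n → ℕ} (hx : ∀ j, x j ≤ N) :
    gridPoint N x ∈ cube n := fun i => by
  have hN' : (0 : ℝ) < N := by exact_mod_cast hN
  have hxi : (x i : ℝ) ≤ N := by exact_mod_cast hx i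
  rw [gridPoint, abs_le, le_sub_iff_add_le, sub_le_iff_le_add, le_div_iff₀ hN', div_le_iff₀ hN']
  constructor <;> nlinarith [(x i).cast_nonneg (α := ℝ)]

theorem gridPoint_of_eq_zero (N : ℕ) {x : Fin n → ℕ} {i : Fin n} (h : x i = 0) :
    gridPoint N x i = -1 := by
  simp [gridPoint, h]

theorem gridPoint_of_eq_top {N : ℕ} (hN : 0 < N) {x : Fin n → ℕ} {i : Fin n} (h : x i = N) :
    gridPoint N x i = 1 := by
  have : (N : ℝ) ≠ 0 := by positivity
  simp only [gridPoint, h, mul_div_assoc, div_self this, mul_one]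
  norm_num

theorem dist_gridPoint_le {N : ℕ} (hN : 0 < N) {x y : Fin n → ℕ}
    (h : ∀ i, x i ≤ y i + 1 ∧ y i ≤ x i + 1) : dist (gridPoint N x) (gridPoint N y) ≤ 2 / N := by
  have hN' : (0 : ℝ) < N := by exact_mod_cast hN
  refine (dist_pi_le_iff (by positivity)).2 fun i => ?_
  obtain ⟨hxy, hyx⟩ : (x i : ℝ) ≤ y i + 1 ∧ (y i : ℝ) ≤ x i + 1 := by exact_mod_cast h i
  rw [Real.dist_eq, gridPoint, gridPoint,
    show 2 * (x i : ℝ) / N - 1 - (2 * y i / N - 1) = 2 * (x i - y i) / N by ring,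
    abs_div, abs_mul, abs_two, abs_of_pos hN']
  gcongr
  have : |(x i : ℝ) - y i| ≤ 1 := abs_sub_le_iff.2 ⟨by linarith, by linarith⟩
  linarith

end Grid

section PoincareMiranda

variable {n : ℕ} (f : (Fin n → ℝ) → (Fin n → ℝ))

/-- If `f ≤ 0` on the faces `xᵢ = -1` and `fᵢ ≥ 0` on the faces `xᵢ = 1`, this labelling satisfies
Sperner's condition, and a rainbow cell has a vertex where `f ≤ 0` and, for each `i`, a vertex
where `fᵢ ≥ 0`. -/
noncomputable def mirandaLabel (N : ℕ) (x : Fin n → ℕ) : ℕ :=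
  if h : ∃ k, ∃ hk : k < n, 0 < f (gridPoint N x) ⟨k, hk⟩ ∨ x ⟨k, hk⟩ = N then Nat.find h else n

variable {f}

theorem mirandaLabel_spec {N : ℕ} {x : Fin n → ℕ} {i : Fin n} (h : mirandaLabel f N x = i) :
    0 < f (gridPoint N x) i ∨ x i = N := by
  unfold mirandaLabel at h
  split_ifs at h with hex
  · obtain ⟨hk, hspec⟩ := Nat.find_spec hex
    simp only [h] at hk hspec
    exact hspec
  · exact absurd h (ne_of_gt i.isLt)

theorem mirandaLabel_le_of {N : ℕ} {x : Fin n → ℕ} {i : Fin n}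
    (hi : 0 < f (gridPoint N x) i ∨ x i = N) : mirandaLabel f N x ≤ i := by
  have hex : ∃ k, ∃ hk : k < n, 0 < f (gridPoint N x) ⟨k, hk⟩ ∨ x ⟨k, hk⟩ = N := ⟨i, i.isLt, hi⟩
  rw [mirandaLabel, dif_pos hex]
  exact Nat.find_min' hex ⟨i.isLt, hi⟩

theorem mirandaLabel_le (N : ℕ) (x : Fin n → ℕ) : mirandaLabel f N x ≤ n := by
  unfold mirandaLabel
  split_ifs with hex
  · exact (Nat.find_spec hex).1.le
  · exact le_rfl

theorem nonpos_of_mirandaLabel_eq {N : ℕ} {x : Fin n → ℕ} (h : mirandaLabel f N x = n) (i : Fin n) :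
    f (gridPoint N x) i ≤ 0 :=
  not_lt.1 fun hi => not_lt.2 (mirandaLabel_le_of (f := f) (Or.inl hi)) (h.symm ▸ i.isLt)

theorem isSpernerLabeling_mirandaLabel {N : ℕ} (hN : 0 < N)
    (hminus : ∀ x ∈ cube n, ∀ i, x i = -1 → f x i ≤ 0) :
    IsSpernerLabeling N (mirandaLabel f N) where
  le_dim x _ := mirandaLabel_le N x
  ne_of_eq_zero x i hx hxi h := by
    rcases mirandaLabel_spec h with hpos | htop
    · exact not_le.2 hpos (hminus _ (gridPoint_mem_cube hN hx) i (gridPoint_of_eq_zero N hxi))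
    · omega
  le_of_eq_top _ _ _ hxi := mirandaLabel_le_of (Or.inr hxi)

open KuhnCell in
theorem exists_mem_cube_norm_le (hf : Continuous f)
    (hminus : ∀ x ∈ cube n, ∀ i, x i = -1 → f x i ≤ 0)
    (hplus : ∀ x ∈ cube n, ∀ i, x i = 1 → 0 ≤ f x i) {ε : ℝ} (hε : 0 < ε) :
    ∃ x ∈ cube n, ‖f x‖ ≤ ε := by
  obtain ⟨δ, hδ, hfδ⟩ := Metric.uniformContinuousOn_iff.1
    ((isCompact_cube n).uniformContinuousOn_of_continuous hf.continuousOn) ε hε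
  obtain ⟨N, hN⟩ := exists_nat_gt (2 / δ)
  have hN0 : 0 < N := by exact_mod_cast (by positivity : (0 : ℝ) < 2 / δ).trans hN
  have hmesh : 2 / (N : ℝ) < δ := by
    rw [div_lt_iff₀ hδ] at hN
    rw [div_lt_iff₀ (by positivity)]
    linarith
  obtain ⟨c, hc⟩ : ∃ c : KuhnCell n N, IsRainbow (mirandaLabel f N) c := by
    obtain ⟨c, hc⟩ := card_pos.1
      (odd_card_isRainbow hN0 (isSpernerLabeling_mirandaLabel hN0 hminus)).pos
    exact ⟨c, (mem_filter.1 hc).2⟩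
  have hmem : ∀ k, gridPoint N (vertex c k) ∈ cube n := fun k =>
    gridPoint_mem_cube hN0 (vertex_le c k)
  obtain ⟨k, -, hk⟩ := hc n le_rfl
  refine ⟨_, hmem k, (pi_norm_le_iff_of_nonneg hε.le).2 fun i => ?_⟩
  obtain ⟨j, -, hj⟩ := hc i i.isLt.le
  have hclose := (dist_le_pi_dist _ _ i).trans_lt <| hfδ _ (hmem k) _ (hmem j) <|
    (dist_gridPoint_le hN0 fun i =>
      ⟨vertex_le_vertex_add_one c k j i, vertex_le_vertex_add_one c j k i⟩).trans_lt hmesh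
  have hu := nonpos_of_mirandaLabel_eq hk i
  have hw : 0 ≤ f (gridPoint N (vertex c j)) i := (mirandaLabel_spec hj).elim le_of_lt
    fun htop => hplus _ (hmem j) i (gridPoint_of_eq_top hN0 htop)
  rw [Real.dist_eq, abs_lt] at hclose
  rw [Real.norm_eq_abs, abs_le]
  constructor <;> linarith

theorem poincare_miranda (hf : Continuous f)
    (hminus : ∀ x ∈ cube n, ∀ i, x i = -1 → f x i ≤ 0)
    (hplus : ∀ x ∈ cube n, ∀ i, x i = 1 → 0 ≤ f x i) :
    ∃ x ∈ cube n, f x = 0 := by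
  obtain ⟨x, hx, hmin⟩ := (isCompact_cube n).exists_isMinOn ⟨0, by simp [cube]⟩
    (continuous_norm.comp hf).continuousOn
  refine ⟨x, hx, norm_le_zero_iff.1 <| le_of_forall_pos_le_add fun ε hε => ?_⟩
  obtain ⟨y, hy, hfy⟩ := exists_mem_cube_norm_le hf hminus hplus hε
  exact (hmin hy).trans (by simpa using hfy)

end PoincareMiranda

theorem mem_convexHull_filter_of_le {E : Type*} [AddCommGroup E] [Module ℝ E]
    (ℓ : E →ₗ[ℝ] ℝ) {c : ℝ} {s : Finset E} (hs : ∀ v ∈ s, ℓ v ≤ c) {x : E}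
    (hx : x ∈ convexHull ℝ (s : Set E)) (hxc : ℓ x = c) :
    x ∈ convexHull ℝ (({v ∈ s | ℓ v = c} : Finset E) : Set E) := by
  obtain ⟨w, hw0, hw1, rfl⟩ := mem_convexHull'.1 hx
  have hslack : ∑ v ∈ s, w v * (c - ℓ v) = 0 := by
    simp only [mul_sub, sum_sub_distrib, ← sum_mul, hw1, one_mul]
    simp [map_sum, map_smul, ← hxc]
  have hzero : ∀ v ∈ s, ℓ v ≠ c → w v = 0 := fun v hv hne =>
    (mul_eq_zero.1 ((sum_eq_zero_iff_of_nonneg fun v hv =>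
      mul_nonneg (hw0 v hv) (sub_nonneg.2 (hs v hv))).1 hslack v hv)).resolve_right
      (sub_ne_zero.2 (Ne.symm hne))
  refine mem_convexHull'.2 ⟨w, fun v hv => hw0 v (mem_filter.1 hv).1, ?_, ?_⟩
  · rw [sum_filter_of_ne (p := fun v => ℓ v = c)
      fun v hv hw => by_contra fun hne => hw (hzero v hv hne), hw1]
  · exact sum_filter_of_ne (p := fun v => ℓ v = c)
      fun v hv hw => by_contra fun hne => hw (by rw [hzero v hv hne, zero_smul])

theorem mem_convexHull_filter_apply_eq {n : ℕ} {σ : Finset (Fin n → ℝ)} (hσ : (σ : Set _) ⊆ cube n)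
    {x : Fin n → ℝ} (hx : x ∈ convexHull ℝ (σ : Set (Fin n → ℝ))) {i : Fin n} {s : ℝ}
    (hs : s = 1 ∨ s = -1) (hxi : x i = s) :
    x ∈ convexHull ℝ (({v ∈ σ | v i = s} : Finset _) : Set (Fin n → ℝ)) := by
  have hss : s * s = 1 := by rcases hs with rfl | rfl <;> norm_num
  have hiff : ∀ v : Fin n → ℝ, s * v i = 1 ↔ v i = s := fun v => by
    constructor <;> intro h
    · rcases hs with rfl | rfl <;> linarith
    · rw [h, hss]
  have h := mem_convexHull_filter_of_le (s • LinearMap.proj i) (c := 1) (fun v hv => ?_) hx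
    (by simp [hxi, hss])
  · simpa only [LinearMap.smul_apply, LinearMap.coe_proj, Function.eval, smul_eq_mul, hiff] using h
  · have := abs_le.1 (hσ hv i)
    simp only [LinearMap.smul_apply, LinearMap.coe_proj, Function.eval, smul_eq_mul]
    rcases hs with rfl | rfl <;> linarith

theorem exists_mem_cube_forall_notMem {n : ℕ} (A B : Fin n → Set (Fin n → ℝ))
    (hA : ∀ i, IsClosed (A i)) (hB : ∀ i, IsClosed (B i)) (hAB : ∀ i, Disjoint (A i) (B i))
    (hAface : ∀ x ∈ cube n, ∀ i, x i = -1 → x ∈ A i)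
    (hBface : ∀ x ∈ cube n, ∀ i, x i = 1 → x ∈ B i) :
    ∃ x ∈ cube n, ∀ i, x ∉ A i ∧ x ∉ B i := by
  have hAne : ∀ i, (A i).Nonempty := fun i => ⟨_, hAface (fun _ => -1) (by simp [cube]) i rfl⟩
  have hBne : ∀ i, (B i).Nonempty := fun i => ⟨_, hBface (fun _ => 1) (by simp [cube]) i rfl⟩
  obtain ⟨x, hx, hzero⟩ := poincare_miranda
    (f := fun x i => Metric.infDist x (A i) - Metric.infDist x (B i))
    (continuous_pi fun i => (Metric.continuous_infDist_pt _).sub (Metric.continuous_infDist_pt _))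
    (fun x hx i hxi => by
      simp [Metric.infDist_zero_of_mem (hAface x hx i hxi), Metric.infDist_nonneg])
    (fun x hx i hxi => by
      simp [Metric.infDist_zero_of_mem (hBface x hx i hxi), Metric.infDist_nonneg])
  refine ⟨x, hx, fun i => ?_⟩
  have hdist : Metric.infDist x (A i) = Metric.infDist x (B i) := sub_eq_zero.1 (congrFun hzero i)
  rw [(hA i).mem_iff_infDist_zero (hAne i), (hB i).mem_iff_infDist_zero (hBne i), hdist, and_self]
  intro h0
  exact Set.disjoint_left.1 (hAB i) (((hA i).mem_iff_infDist_zero (hAne i)).2 (hdist.trans h0))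
    (((hB i).mem_iff_infDist_zero (hBne i)).2 h0)

section LabelRegion

variable {n : ℕ} (K : Geometry.SimplicialComplex ℝ (Fin n → ℝ)) (lab : (Fin n → ℝ) → (Fin n → ℝ))

def labelRegion (i : Fin n) (s : ℝ) : Set (Fin n → ℝ) :=
  ⋃ σ ∈ {σ ∈ K.faces | ∀ v ∈ σ, lab v i = s}, convexHull ℝ (σ : Set (Fin n → ℝ))

variable {K lab}

theorem mem_labelRegion {σ : Finset (Fin n → ℝ)} (hσ : σ ∈ K.faces) {i : Fin n} {s : ℝ}
    (hlab : ∀ v ∈ σ, lab v i = s) {x : Fin n → ℝ} (hx : x ∈ convexHull ℝ (σ : Set (Fin n → ℝ))) :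
    x ∈ labelRegion K lab i s :=
  Set.mem_biUnion (x := σ) ⟨hσ, hlab⟩ hx

theorem isClosed_labelRegion (hfin : K.faces.Finite) (i : Fin n) (s : ℝ) :
    IsClosed (labelRegion K lab i s) :=
  (hfin.subset fun _ h => h.1).isClosed_biUnion fun σ _ =>
    (σ.finite_toSet.isCompact_convexHull ℝ).isClosed

theorem disjoint_labelRegion {i : Fin n} {s t : ℝ} (hst : s ≠ t) :
    Disjoint (labelRegion K lab i s) (labelRegion K lab i t) := by
  refine Set.disjoint_left.2 fun x hx hx' => ?_
  simp only [labelRegion, Set.mem_iUnion, Set.mem_ofPred_eq, exists_prop] at hx hx'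
  obtain ⟨σ, ⟨hσ, hσs⟩, hxσ⟩ := hx
  obtain ⟨τ, ⟨hτ, hτt⟩, hxτ⟩ := hx'
  have hx'' : x ∈ convexHull ℝ ((σ : Set _) ∩ τ) := K.convexHull_inter_convexHull hσ hτ ▸ ⟨hxσ, hxτ⟩
  obtain ⟨v, hvσ, hvτ⟩ := convexHull_nonempty_iff.1 ⟨x, hx''⟩
  exact hst ((hσs v hvσ).symm.trans (hτt v hvτ))

theorem mem_labelRegion_of_apply_eq (hspace : K.space = cube n)
    (hproper : ∀ x ∈ K.vertices, ∀ i : Fin n, (x i = -1 ∨ x i = 1) → lab x i = x i)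
    {x : Fin n → ℝ} (hx : x ∈ cube n) {i : Fin n} {s : ℝ} (hs : s = 1 ∨ s = -1) (hxi : x i = s) :
    x ∈ labelRegion K lab i s := by
  obtain ⟨σ, hσ, hxσ⟩ := K.mem_space_iff.1 (hspace.symm ▸ hx)
  have hxτ := mem_convexHull_filter_apply_eq (hspace ▸ K.subset_space hσ) hxσ hs hxi
  have hτ : {v ∈ σ | v i = s} ∈ K.faces := K.down_closed hσ (filter_subset _ _)
    (coe_nonempty.1 (convexHull_nonempty_iff.1 ⟨x, hxτ⟩))
  refine mem_labelRegion hτ (fun v hv => ?_) hxτ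
  have hvi := (mem_filter.1 hv).2
  have hv₁ : v i = -1 ∨ v i = 1 := hvi ▸ hs.symm
  rw [hproper v (K.vertices_eq ▸ Set.mem_biUnion hτ hv) i hv₁, hvi]

end LabelRegion

theorem cubical_sperner_cubical_labels_general
    (n : ℕ) (K : Geometry.SimplicialComplex ℝ (Fin n → ℝ))
    (hfin : K.faces.Finite)
    (hspace : K.space = cube n)
    (lab : (Fin n → ℝ) → (Fin n → ℝ))
    (hlab : ∀ x ∈ K.vertices, lab x ∈ extCube n)
    (hproper : ∀ x ∈ K.vertices, ∀ i : Fin n, (x i = -1 ∨ x i = 1) → lab x i = x i) :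
    ∃ σ ∈ K.faces, ∀ i : Fin n,
      (∃ v₁ ∈ σ, lab v₁ i = -1) ∧ (∃ v₂ ∈ σ, lab v₂ i = 1) := by
  by_contra! hnone
  obtain ⟨x, hx, hfree⟩ := exists_mem_cube_forall_notMem
    (fun i => labelRegion K lab i (-1)) (fun i => labelRegion K lab i 1)
    (fun i => isClosed_labelRegion hfin i _) (fun i => isClosed_labelRegion hfin i _)
    (fun _ => disjoint_labelRegion (by norm_num))
    (fun _ hx _ => mem_labelRegion_of_apply_eq hspace hproper hx (Or.inr rfl))
    (fun _ hx _ => mem_labelRegion_of_apply_eq hspace hproper hx (Or.inl rfl))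
  obtain ⟨σ, hσ, hxσ⟩ := K.mem_space_iff.1 (hspace.symm ▸ hx)
  obtain ⟨i, hi⟩ := hnone σ hσ
  have hext : ∀ v ∈ σ, lab v i = 1 ∨ lab v i = -1 := fun v hv =>
    hlab v (K.vertices_eq ▸ Set.mem_biUnion hσ hv) i
  by_cases hneg : ∃ v₁ ∈ σ, lab v₁ i = -1
  · exact (hfree i).1 (mem_labelRegion hσ (fun v hv => (hext v hv).resolve_left (hi hneg v hv)) hxσ)
  · push Not at hneg
    exact (hfree i).2 (mem_labelRegion hσ (fun v hv => (hext v hv).resolve_right (hneg v hv)) hxσ)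

/-- **Cubical Sperner with Cubical Labels.** Let `K` be a finite
triangulation of `□ⁿ` and let `lab` assign to each vertex of `K` an extreme point of
`□ⁿ` such that whenever a vertex `x` has `xᵢ ∈ {−1, 1}`, the label of `x` agrees with
`x` at coordinate `i`.  Then `K` contains a neutral simplex: a simplex `σ` such that
for every coordinate `i` some vertex of `σ` has label with `i`-th coordinate `−1` and
some vertex has label with `i`-th coordinate `+1`. -/
theorem cubical_sperner_cubical_labels
    (n : ℕ) (hn : 1 ≤ n) (K : Geometry.SimplicialComplex ℝ (Fin n → ℝ))
    (hfin : K.faces.Finite)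
    (hspace : K.space = cube n)
    (lab : (Fin n → ℝ) → (Fin n → ℝ))
    (hlab : ∀ x ∈ K.vertices, lab x ∈ extCube n)
    (hproper : ∀ x ∈ K.vertices, ∀ i : Fin n, (x i = -1 ∨ x i = 1) → lab x i = x i) :
    ∃ σ ∈ K.faces, ∀ i : Fin n,
      (∃ v₁ ∈ σ, lab v₁ i = -1) ∧ (∃ v₂ ∈ σ, lab v₂ i = 1) :=
  cubical_sperner_cubical_labels_general n K hfin hspace lab hlab hproper
end

section
/- Let i ≥ 1, let s be a finite set with |s| = i+1 (in an arbitrary type), and let P be any predicate on finite sets. Then the number of subsets t ⊆ s with |t| = i for which the number of subsets u ⊆ t with |u| = i−1 satisfying P(u) is odd, is even. -/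
open scoped Classical

/-- Let `i ≥ 1`, let `s` be a finite set with `i + 1` elements, and
let `P` be any predicate on finite sets.  Then the number of `i`-element subsets
`t ⊆ s` for which the number of `(i−1)`-element subsets `u ⊆ t` satisfying `P u` is
odd, is even. -/
theorem even_card_subsets_with_odd_count
    {α : Type*} (i : ℕ) (hi : 1 ≤ i) (s : Finset α) (hs : s.card = i + 1)
    (P : Finset α → Prop) :
    Even (((s.powersetCard i).filter
      (fun t => Odd (((t.powersetCard (i - 1)).filter P).card))).card) := by
  classical
  refine (Finset.even_sum_iff_even_card_odd
    (fun t : Finset α => ((t.powersetCard (i - 1)).filter P).card)).mp ?_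
  set B := (s.powersetCard (i - 1)).filter P with hB
  -- rewrite each inner filter as a filter over B
  have hinner : ∀ t ∈ s.powersetCard i,
      ((t.powersetCard (i - 1)).filter P).card
        = (B.filter (fun u => u ⊆ t)).card := by
    intro t ht
    rw [Finset.mem_powersetCard] at ht
    congr 1
    ext u
    simp only [hB, Finset.mem_filter, Finset.mem_powersetCard]
    constructor
    · rintro ⟨⟨hut, hcard⟩, hP⟩
      exact ⟨⟨⟨hut.trans ht.1, hcard⟩, hP⟩, hut⟩
    · rintro ⟨⟨⟨_, hcard⟩, hP⟩, hut⟩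
      exact ⟨⟨hut, hcard⟩, hP⟩
  rw [Finset.sum_congr rfl hinner]
  -- swap the sums
  have hswap : ∑ t ∈ s.powersetCard i, (B.filter (fun u => u ⊆ t)).card
      = ∑ u ∈ B, ((s.powersetCard i).filter (fun t => u ⊆ t)).card := by
    simp only [Finset.card_filter]
    exact Finset.sum_comm
  rw [hswap]
  -- each u is contained in exactly two t's
  have hkey : ∀ u ∈ B, ((s.powersetCard i).filter (fun t => u ⊆ t)).card = 2 := by
    intro u hu
    rw [hB, Finset.mem_filter, Finset.mem_powersetCard] at hu
    obtain ⟨⟨hus, hucard⟩, _⟩ := hu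
    have him : (s.powersetCard i).filter (fun t => u ⊆ t)
        = (s \ u).image (fun x => insert x u) := by
      ext t
      simp only [Finset.mem_filter, Finset.mem_powersetCard, Finset.mem_image,
        Finset.mem_sdiff]
      constructor
      · rintro ⟨⟨hts, htcard⟩, hut⟩
        have h1 : (t \ u).card = 1 := by
          rw [Finset.card_sdiff_of_subset hut, htcard, hucard]
          omega
        obtain ⟨x, hx⟩ := Finset.card_eq_one.mp h1
        have hxt : x ∈ t \ u := by rw [hx]; exact Finset.mem_singleton_self x
        rw [Finset.mem_sdiff] at hxt
        refine ⟨x, ⟨hts hxt.1, hxt.2⟩, ?_⟩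
        apply Finset.Subset.antisymm
        · intro y hy
          rcases Finset.mem_insert.mp hy with h | h
          · exact h ▸ hxt.1
          · exact hut h
        · intro y hy
          by_cases hyu : y ∈ u
          · exact Finset.mem_insert_of_mem hyu
          · have : y ∈ t \ u := Finset.mem_sdiff.mpr ⟨hy, hyu⟩
            rw [hx, Finset.mem_singleton] at this
            exact this ▸ Finset.mem_insert_self x u
      · rintro ⟨x, ⟨hxs, hxu⟩, rfl⟩
        refine ⟨⟨Finset.insert_subset hxs hus, ?_⟩, Finset.subset_insert x u⟩
        rw [Finset.card_insert_of_notMem hxu, hucard]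
        omega
    rw [him, Finset.card_image_of_injOn, Finset.card_sdiff_of_subset hus, hs, hucard]
    · omega
    · intro x hx y hy hxy
      rw [Finset.mem_coe, Finset.mem_sdiff] at hx hy
      have hxy' : insert x u = insert y u := hxy
      have : x ∈ insert y u := hxy' ▸ Finset.mem_insert_self x u
      rcases Finset.mem_insert.mp this with h | h
      · exact h
      · exact absurd h hx.2
  rw [Finset.sum_congr rfl hkey, Finset.sum_const, smul_eq_mul]
  exact ⟨B.card, by ring⟩
end

section
/- Let n ≥ 1, and consider the label set L = {+1,−1,+2,−2,…,+n,−n} with negation as involution. Let F be the set of labellings (multisets over L) containing a complementary pair {+j,−j} for some j. Define M^0 to be the set of all 1-element labellings, and recursively for i = 1,…,n: partition M^{i−1} into M^{i−1}_+ ⊔ M^{i−1}_− by declaring ℓ ∈ M^{i−1}_+ iff the element of ℓ of least absolute value is positive (this is well-defined since ℓ contains no complementary pair); then let M^i be the set of multisets ℓ of size i+1 containing no complementary pair such that an odd number of the i+1 one-element deletions of ℓ yield a labelling in M^{i−1}_+. Then for every 0 ≤ i ≤ n−1: M^i_+ = {{k_1, −k_2, k_3, …, (−1)^i k_{i+1}}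 : 1 ≤ k_1 < k_2 < … < k_{i+1} ≤ n}, M^i_− = {{−k_1, k_2, −k_3, …, (−1)^{i+1} k_{i+1}} : 1 ≤ k_1 < … < k_{i+1} ≤ n}, and consequently M^n = ∅. -/
open scoped Classical

noncomputable section

/-- The multiset `m` consists of labels from `{±1, …, ±n} ⊆ ℤ`. -/
def overL (n : ℕ) (m : Multiset ℤ) : Prop := ∀ x ∈ m, 1 ≤ |x| ∧ |x| ≤ (n : ℤ)

/-- The multiset `m` contains a complementary pair `{+j, −j}`. -/
def hasCompl (m : Multiset ℤ) : Prop := ∃ j : ℤ, j ∈ m ∧ -j ∈ m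

/-- The element of `m` of least absolute value is positive.  (For a multiset with no
complementary pair this singles out one of `m`, `−m`.) -/
def posMin (m : Multiset ℤ) : Prop := ∃ x ∈ m, 0 < x ∧ ∀ y ∈ m, |x| ≤ |y|

/-- The sets `Mⁱ` of Ky Fan's parity proof of Tucker's lemma: `M 0` is the set of all
`1`-element labellings; `M (i+1)` is the set of complementary-pair-free labellings of
size `i + 2` an odd number of whose one-element deletions lie in the positive half
`Mⁱ₊ = {m ∈ Mⁱ | posMin m}`. -/
def M (n : ℕ) : ℕ → Set (Multiset ℤ)
  | 0 => {m | Multiset.card m = 1 ∧ overL n m}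
  | (i + 1) => {m | Multiset.card m = i + 2 ∧ overL n m ∧ ¬hasCompl m ∧
      Odd (Multiset.card ((m.map (fun a => m.erase a)).filter
        (fun t => t ∈ M n i ∧ posMin t)))}

/-- The positive half `Mⁱ₊` of the partition of `Mⁱ`. -/
def Mp (n i : ℕ) : Set (Multiset ℤ) := {m | m ∈ M n i ∧ posMin m}

/-- The alternating labellings `{k₁, −k₂, k₃, …, (−1)ⁱ k_{i+1}}` with
`1 ≤ k₁ < … < k_{i+1} ≤ n`; `ε = 0` gives the `+` version, `ε = 1` the `−` version. -/
def alt (n i ε : ℕ) : Set (Multiset ℤ) :=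
  {m | ∃ k : Fin (i + 1) → ℤ, StrictMono k ∧ (∀ j, 1 ≤ k j ∧ k j ≤ (n : ℤ)) ∧
    m = ↑(List.ofFn fun j : Fin (i + 1) => (-1 : ℤ) ^ ((j : ℕ) + ε) * k j)}

/-!
By induction on `i`, `Mⁱ` consists exactly of the alternating labellings, the sign of the label
of least absolute value deciding the half. Write a duplicate-free labelling of size `i + 2`
without complementary pair as `{e₀k₀, …, e_{i+1}k_{i+1}}` with `k` increasing and signs `eⱼ`.
Deleting `eⱼkⱼ` gives an element of `Mⁱ₊` iff `eₗ = (-1)ˡ` for `l < j` and `eₗ ≠ (-1)ˡ` for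
`l > j`; the number of such `j` is odd exactly when `eₗ = (-1)ˡ` holds for all `l` or for none,
i.e. when the labelling is alternating. If a label is repeated, the accepted deletions remove
one of two copies of the same label, so they come in pairs. An alternating labelling of size
`n + 1` would need `n + 1` distinct magnitudes in `{1, …, n}`, hence `Mⁿ = ∅`.
-/

open scoped Finset

section Deletions

variable {α : Type*} [DecidableEq α]

lemma erase_ofFn {c : ℕ} (f : Fin (c + 1) → α) (j : Fin (c + 1)) :
    (↑(List.ofFn f) : Multiset α).erase (f j) = ↑(List.ofFn (f ∘ j.succAbove)) := by
  rw [← Fin.univ_val_map, ← Fin.univ_val_map, Fin.univ_succAbove c j, Finset.cons_val,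
    Multiset.map_cons, Multiset.erase_cons_head, Finset.map_val, Multiset.map_map]
  rfl

lemma card_filter_map_erase_ofFn {c : ℕ} (f : Fin (c + 1) → α) (P : Multiset α → Prop)
    [DecidablePred P] :
    Multiset.card (((↑(List.ofFn f) : Multiset α).map
        fun a => (↑(List.ofFn f) : Multiset α).erase a).filter P) =
      #{j : Fin (c + 1) | P ↑(List.ofFn (f ∘ j.succAbove))} := by
  rw [Multiset.filter_map, Multiset.card_map, ← Fin.univ_val_map f, Multiset.filter_map,
    Multiset.card_map, Finset.card_def, Finset.filter_val]
  simp only [Function.comp_def, Fin.univ_val_map, erase_ofFn]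

lemma even_card_filter_map_erase_of_not_nodup {P : Multiset α → Prop} [DecidablePred P]
    (hP : ∀ t, P t → t.Nodup) {m : Multiset α} (hm : ¬ m.Nodup) :
    Even (Multiset.card ((m.map fun a => m.erase a).filter P)) := by
  rw [← Multiset.countP_eq_card_filter, Multiset.countP_map]
  obtain ⟨y, hy⟩ : ∃ y, 1 < m.count y := by
    simpa [Multiset.nodup_iff_count_le_one] using hm
  have count_eq_two : ∀ a, P (m.erase a) → m.count a = 2 := by
    intro a ha
    have hnd := Multiset.nodup_iff_count_le_one.mp (hP _ ha)
    obtain rfl : a = y := by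
      by_contra hne
      have := hnd y
      rw [Multiset.count_erase_of_ne (Ne.symm hne)] at this
      omega
    have := hnd a
    rw [Multiset.count_erase_self] at this
    omega
  rw [← Multiset.toFinset_sum_count_eq]
  refine even_iff_two_dvd.mpr (Finset.dvd_sum fun a ha => ?_)
  rw [Multiset.mem_toFinset, Multiset.mem_filter] at ha
  rw [Multiset.count_filter, if_pos ha.2, count_eq_two a ha.2]

end Deletions

def signedLabelling {c : ℕ} (k : Fin c → ℤ) (e : Fin c → ℤˣ) : Multiset ℤ :=
  ↑(List.ofFn fun j => (e j : ℤ) * k j)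

lemma abs_units_mul (u : ℤˣ) (x : ℤ) : |(u : ℤ) * x| = |x| := by
  rcases Int.units_eq_one_or u with rfl | rfl <;> simp

section SignedLabelling

variable {n c : ℕ} {k : Fin c → ℤ} {e : Fin c → ℤˣ}

lemma mem_signedLabelling {x : ℤ} : x ∈ signedLabelling k e ↔ ∃ j, (e j : ℤ) * k j = x := by
  simp [signedLabelling, List.mem_ofFn]

@[simp]
lemma card_signedLabelling : Multiset.card (signedLabelling k e) = c := by
  simp [signedLabelling]

lemma abs_units_mul_of_pos (hpos : ∀ j, 0 < k j) (j : Fin c) : |(e j : ℤ) * k j| = k j := by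
  rw [abs_units_mul, abs_of_pos (hpos j)]

lemma map_abs_signedLabelling (hpos : ∀ j, 0 < k j) :
    (signedLabelling k e).map abs = ↑(List.ofFn k) := by
  simp only [signedLabelling, Multiset.map_coe, List.map_ofFn, Function.comp_def,
    abs_units_mul_of_pos hpos]

lemma signedLabelling_inj {k' : Fin c → ℤ} {e' : Fin c → ℤˣ} (hk : StrictMono k)
    (hk' : StrictMono k') (hpos : ∀ j, 0 < k j) (hpos' : ∀ j, 0 < k' j)
    (h : signedLabelling k e = signedLabelling k' e') : k = k' ∧ e = e' := by
  have hkk' : k = k' := by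
    have habs := congrArg (Multiset.map abs) h
    rw [map_abs_signedLabelling hpos, map_abs_signedLabelling hpos', Multiset.coe_eq_coe] at habs
    exact List.ofFn_injective <| habs.eq_of_sortedLE
      (List.sortedLT_ofFn_iff.mpr hk).sortedLE (List.sortedLT_ofFn_iff.mpr hk').sortedLE
  subst hkk'
  refine ⟨rfl, funext fun j => ?_⟩
  obtain ⟨l, hl⟩ := mem_signedLabelling.mp (h ▸ mem_signedLabelling.mpr ⟨j, rfl⟩)
  have hlj : l = j := hk.injective <| by
    simpa only [abs_units_mul_of_pos hpos] using congrArg abs hl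
  subst hlj
  exact (Units.val_injective (mul_right_cancel₀ (hpos l).ne' hl)).symm

lemma nodup_signedLabelling (hk : Function.Injective k) (hpos : ∀ j, 0 < k j) :
    (signedLabelling k e).Nodup := by
  refine Multiset.coe_nodup.mpr (List.nodup_ofFn.mpr fun a b hab => hk ?_)
  simpa only [abs_units_mul_of_pos hpos] using congrArg abs hab

lemma not_hasCompl_signedLabelling (hk : Function.Injective k) (hpos : ∀ j, 0 < k j) :
    ¬ hasCompl (signedLabelling k e) := by
  rintro ⟨x, hx, hnx⟩
  obtain ⟨a, rfl⟩ := mem_signedLabelling.mp hx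
  obtain ⟨b, hb⟩ := mem_signedLabelling.mp hnx
  obtain rfl : b = a := hk <| by
    simpa only [abs_units_mul_of_pos hpos, abs_neg] using congrArg abs hb
  have := hpos b
  rcases Int.units_eq_one_or (e b) with h | h <;>
    simp only [h, Units.val_neg, Units.val_one, neg_mul, one_mul] at hb <;> omega

lemma overL_signedLabelling (hb : ∀ j, 1 ≤ k j ∧ k j ≤ (n : ℤ)) :
    overL n (signedLabelling k e) := by
  intro x hx
  obtain ⟨j, rfl⟩ := mem_signedLabelling.mp hx
  rw [abs_units_mul_of_pos fun j => (hb j).1]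
  exact hb j

lemma posMin_signedLabelling_iff {k : Fin (c + 1) → ℤ} {e : Fin (c + 1) → ℤˣ}
    (hk : StrictMono k) (hpos : ∀ j, 0 < k j) : posMin (signedLabelling k e) ↔ e 0 = 1 := by
  constructor
  · rintro ⟨x, hx, hx0, hmin⟩
    obtain ⟨j, rfl⟩ := mem_signedLabelling.mp hx
    have hle := hmin _ (mem_signedLabelling.mpr ⟨0, rfl⟩)
    rw [abs_units_mul_of_pos hpos, abs_units_mul_of_pos hpos] at hle
    obtain rfl : j = 0 := hk.le_iff_le.mp hle |>.antisymm (Fin.zero_le j)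
    rcases Int.units_eq_one_or (e 0) with h | h
    · exact h
    · simp only [h, Units.val_neg, Units.val_one, neg_mul, one_mul] at hx0
      linarith [hpos 0]
  · intro h
    refine ⟨k 0, mem_signedLabelling.mpr ⟨0, by simp [h]⟩, hpos 0, fun y hy => ?_⟩
    obtain ⟨j, rfl⟩ := mem_signedLabelling.mp hy
    rw [abs_units_mul_of_pos hpos, abs_of_pos (hpos 0)]
    exact hk.monotone (Fin.zero_le j)

end SignedLabelling

lemma exists_signedLabelling_eq {n c : ℕ} {m : Multiset ℤ} (hL : overL n m) (hnd : m.Nodup)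
    (hcp : ¬ hasCompl m) (hcard : Multiset.card m = c) :
    ∃ (k : Fin c → ℤ) (e : Fin c → ℤˣ), StrictMono k ∧ (∀ j, 1 ≤ k j ∧ k j ≤ (n : ℤ)) ∧
      m = signedLabelling k e := by
  have habs_inj : ∀ x ∈ m, ∀ y ∈ m, |x| = |y| → x = y := by
    intro x hx y hy hxy
    refine (abs_eq_abs.mp hxy).resolve_right fun h => hcp ⟨y, hy, ?_⟩
    rwa [← h]
  have hval : (m.map abs).toFinset.val = m.map abs :=
    (Multiset.toFinset_val _).trans (hnd.map_on habs_inj).dedup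
  have hcard' : (m.map abs).toFinset.card = c := by
    rw [Finset.card_def, hval, Multiset.card_map, hcard]
  set k := (m.map abs).toFinset.orderEmbOfFin hcard'
  -- `|x| ↦ x` on `m`: exactly one of `±|x|` lies in `m`
  let unabs : ℤ → ℤ := fun y => if y ∈ m then y else -y
  have hunabs : ∀ x ∈ m, unabs |x| = x := by
    intro x hx
    rcases abs_choice x with h | h <;> rw [h]
    · simp [unabs, hx]
    · simp only [unabs, neg_neg, ite_eq_right_iff]
      exact fun hnx => (hcp ⟨x, hx, hnx⟩).elim
  refine ⟨k, fun j => if k j ∈ m then 1 else -1, k.strictMono, fun j => ?_, ?_⟩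
  · obtain ⟨x, hx, hxk⟩ := Multiset.mem_map.mp
      (Multiset.mem_toFinset.mp ((m.map abs).toFinset.orderEmbOfFin_mem hcard' j))
    exact hxk ▸ hL x hx
  · calc m = (m.map abs).map unabs := by
          rw [Multiset.map_map]
          exact (Multiset.map_congr rfl hunabs).trans (Multiset.map_id m) |>.symm
      _ = (Finset.univ.val.map k).map unabs := by
          rw [← hval, ← Finset.map_orderEmbOfFin_univ _ hcard', Finset.map_val]
          rfl
      _ = signedLabelling k _ := by
          rw [Multiset.map_map, Fin.univ_val_map, signedLabelling]
          congr 1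
          refine List.ofFn_inj.mpr (funext fun j => ?_)
          by_cases h : k j ∈ m <;> simp [unabs, h]

section Alternating

variable {n i ε : ℕ}

lemma mem_alt_iff {m : Multiset ℤ} :
    m ∈ alt n i ε ↔ ∃ k : Fin (i + 1) → ℤ, StrictMono k ∧ (∀ j, 1 ≤ k j ∧ k j ≤ (n : ℤ)) ∧
      m = signedLabelling k fun j => (-1) ^ ((j : ℕ) + ε) := by
  simp [alt, signedLabelling]

lemma signedLabelling_mem_alt_iff {k : Fin (i + 1) → ℤ} {e : Fin (i + 1) → ℤˣ}
    (hk : StrictMono k) (hb : ∀ j, 1 ≤ k j ∧ k j ≤ (n : ℤ)) :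
    signedLabelling k e ∈ alt n i ε ↔ ∀ j, e j = (-1) ^ ((j : ℕ) + ε) := by
  refine ⟨fun h => ?_, fun h => mem_alt_iff.mpr ⟨k, hk, hb, by rw [← funext h]⟩⟩
  obtain ⟨k', hk', hb', heq⟩ := mem_alt_iff.mp h
  exact congrFun (signedLabelling_inj hk hk' (fun j => (hb j).1) (fun j => (hb' j).1) heq).2

lemma card_overL_not_hasCompl_nodup_of_mem_alt {m : Multiset ℤ} (h : m ∈ alt n i ε) :
    Multiset.card m = i + 1 ∧ overL n m ∧ ¬ hasCompl m ∧ m.Nodup := by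
  obtain ⟨k, hk, hb, rfl⟩ := mem_alt_iff.mp h
  exact ⟨card_signedLabelling, overL_signedLabelling hb,
    not_hasCompl_signedLabelling hk.injective fun j => (hb j).1,
    nodup_signedLabelling hk.injective fun j => (hb j).1⟩

lemma posMin_iff_of_mem_alt {m : Multiset ℤ} (h : m ∈ alt n i ε) : posMin m ↔ Even ε := by
  obtain ⟨k, hk, hb, rfl⟩ := mem_alt_iff.mp h
  rw [posMin_signedLabelling_iff hk fun j => (hb j).1, Fin.val_zero, zero_add]
  rcases Nat.even_or_odd ε with h | h
  · simp [h, h.neg_one_pow]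
  · simp [Nat.not_even_iff_odd.mpr h, h.neg_one_pow]

end Alternating

lemma halves_of_M_eq_union {n i : ℕ} (h : M n i = alt n i 0 ∪ alt n i 1) :
    Mp n i = alt n i 0 ∧ M n i \ Mp n i = alt n i 1 := by
  have h0 : ∀ m ∈ alt n i 0, posMin m := fun m hm => (posMin_iff_of_mem_alt hm).mpr (by decide)
  have h1 : ∀ m ∈ alt n i 1, ¬ posMin m := fun m hm => by simp [posMin_iff_of_mem_alt hm]
  constructor <;> ext m <;> have := h0 m <;> have := h1 m <;>
    simp only [Mp, Set.mem_sdiff, Set.mem_ofPred_eq, h, Set.mem_union] <;> tauto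

lemma forall_succAbove_eq_neg_one_pow_iff {c : ℕ} (e : Fin (c + 2) → ℤˣ) (j : Fin (c + 2)) :
    (∀ l : Fin (c + 1), e (j.succAbove l) = (-1) ^ (l : ℕ)) ↔
      (∀ l < j, e l = (-1) ^ (l : ℕ)) ∧ ∀ l, j < l → e l ≠ (-1) ^ (l : ℕ) := by
  constructor
  · intro h
    refine ⟨fun l hl => ?_, fun l hl => ?_⟩
    · simpa [Fin.succAbove_castPred_of_lt _ _ hl] using h (l.castPred (Fin.ne_last_of_lt hl))
    · have := h (l.pred (Fin.ne_zero_of_lt hl))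
      rw [Fin.succAbove_pred_of_lt _ _ hl] at this
      rw [this, Int.units_ne_iff_eq_neg]
      obtain ⟨l, rfl⟩ := Fin.exists_succ_eq.mpr (Fin.ne_zero_of_lt hl)
      simp [pow_succ]
  · rintro ⟨hlt, hgt⟩ l
    rcases lt_or_ge l.castSucc j with hl | hl
    · rw [Fin.succAbove_of_castSucc_lt _ _ hl]
      exact hlt _ hl
    · rw [Fin.succAbove_of_le_castSucc _ _ hl]
      simpa [pow_succ] using Int.units_ne_iff_eq_neg.mp (hgt l.succ (Fin.le_castSucc_iff.mp hl))

lemma odd_card_threshold_iff {c : ℕ} (t : Fin (c + 1) → Prop) [DecidablePred t] :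
    Odd #{j : Fin (c + 1) | (∀ l < j, t l) ∧ ∀ l, j < l → ¬ t l} ↔
      (∀ l, t l) ∨ ∀ l, ¬ t l := by
  induction c with
  | zero => simp [Fin.forall_fin_one, em]
  | succ c ih =>
    have h0 : ((∀ l < (0 : Fin (c + 2)), t l) ∧ ∀ l, 0 < l → ¬ t l) ↔
        ∀ l : Fin (c + 1), ¬ t l.succ := by
      rw [Fin.forall_fin_succ (P := fun l => 0 < l → ¬ t l)]
      simp [Fin.succ_pos]
    have hsucc : ∀ j : Fin (c + 1), ((∀ l < j.succ, t l) ∧ ∀ l, j.succ < l → ¬ t l) ↔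
        t 0 ∧ (∀ l < j, t l.succ) ∧ ∀ l, j < l → ¬ t l.succ := by
      intro j
      rw [Fin.forall_fin_succ (P := fun l => l < j.succ → t l),
        Fin.forall_fin_succ (P := fun l => j.succ < l → ¬ t l)]
      simp only [Fin.succ_pos, forall_const, Fin.succ_lt_succ_iff, not_lt_zero,
        IsEmpty.forall_iff, true_and]
      tauto
    -- count(t) = [∀ l, ¬ t l.succ] + [t 0] * count(t ∘ Fin.succ)
    rw [Fin.card_filter_univ_succ', if_congr h0 rfl rfl]
    simp only [hsucc, Fin.forall_fin_succ (P := t), Fin.forall_fin_succ (P := fun l => ¬ t l)]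
    have hne : ¬ ((∀ l : Fin (c + 1), t l.succ) ∧ ∀ l : Fin (c + 1), ¬ t l.succ) :=
      fun h => h.2 0 (h.1 0)
    by_cases ht0 : t 0
    · split_ifs <;>
        simp only [ht0, true_and, not_true, false_and, or_false, zero_add, add_comm 1,
          Nat.odd_add_one, ih fun l => t l.succ] <;> tauto
    · split_ifs <;> simp [*]

lemma signedLabelling_mem_alt_union_iff {n i : ℕ} {k : Fin (i + 1) → ℤ}
    {e : Fin (i + 1) → ℤˣ} (hk : StrictMono k) (hb : ∀ j, 1 ≤ k j ∧ k j ≤ (n : ℤ)) :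
    signedLabelling k e ∈ alt n i 0 ∪ alt n i 1 ↔
      (∀ l, e l = (-1) ^ (l : ℕ)) ∨ ∀ l, e l ≠ (-1) ^ (l : ℕ) := by
  simp only [Set.mem_union, signedLabelling_mem_alt_iff hk hb, add_zero, pow_succ, mul_neg_one,
    Int.units_ne_iff_eq_neg]

lemma card_filter_map_erase_signedLabelling {n i : ℕ} (hp : Mp n i = alt n i 0)
    {k : Fin (i + 2) → ℤ} {e : Fin (i + 2) → ℤˣ} (hk : StrictMono k)
    (hb : ∀ j, 1 ≤ k j ∧ k j ≤ (n : ℤ)) :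
    Multiset.card (((signedLabelling k e).map fun a => (signedLabelling k e).erase a).filter
        fun t => t ∈ M n i ∧ posMin t) =
      #{j : Fin (i + 2) | (∀ l < j, e l = (-1) ^ (l : ℕ)) ∧ ∀ l, j < l → e l ≠ (-1) ^ (l : ℕ)} := by
  rw [signedLabelling, card_filter_map_erase_ofFn]
  refine congrArg Finset.card (Finset.filter_congr fun j _ => ?_)
  change signedLabelling (k ∘ j.succAbove) (e ∘ j.succAbove) ∈ Mp n i ↔ _
  rw [hp, signedLabelling_mem_alt_iff (hk.comp (Fin.strictMono_succAbove j)) fun l => hb _,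
    ← forall_succAbove_eq_neg_one_pow_iff]
  simp only [add_zero, Function.comp_apply]

lemma M_succ_eq {n i : ℕ} (hp : Mp n i = alt n i 0) :
    M n (i + 1) = alt n (i + 1) 0 ∪ alt n (i + 1) 1 := by
  ext m
  by_cases hm : Multiset.card m = i + 2 ∧ overL n m ∧ ¬ hasCompl m ∧ m.Nodup
  · obtain ⟨hcard, hL, hcp, hnd⟩ := hm
    obtain ⟨k, e, hk, hb, rfl⟩ := exists_signedLabelling_eq hL hnd hcp hcard
    rw [signedLabelling_mem_alt_union_iff hk hb, ← odd_card_threshold_iff]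
    change _ ∧ _ ∧ _ ∧ Odd _ ↔ _
    rw [card_filter_map_erase_signedLabelling hp hk hb]
    exact ⟨fun h => h.2.2.2, fun h => ⟨hcard, hL, hcp, h⟩⟩
  · refine iff_of_false (fun ⟨hcard, hL, hcp, hodd⟩ => ?_)
      fun h => hm (h.elim card_overL_not_hasCompl_nodup_of_mem_alt
        card_overL_not_hasCompl_nodup_of_mem_alt)
    refine Nat.not_even_iff_odd.mpr hodd (even_card_filter_map_erase_of_not_nodup ?_ ?_)
    · exact fun t ht => (card_overL_not_hasCompl_nodup_of_mem_alt (hp ▸ ht : t ∈ alt n i 0)).2.2.2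
    · exact fun hnd => hm ⟨hcard, hL, hcp, hnd⟩

lemma M_zero_eq (n : ℕ) : M n 0 = alt n 0 0 ∪ alt n 0 1 := by
  ext m
  refine ⟨fun ⟨hcard, hL⟩ => ?_, fun hm => ?_⟩
  · obtain ⟨x, rfl⟩ := Multiset.card_eq_one.mp hcard
    have hx := hL x (Multiset.mem_singleton_self x)
    simp only [Set.mem_union, mem_alt_iff]
    rcases abs_choice x with h | h
    · exact Or.inl ⟨fun _ => x, Subsingleton.strictMono (α := Fin 1) _, fun _ => h ▸ hx,
        by simp [signedLabelling]⟩
    · exact Or.inr ⟨fun _ => -x, Subsingleton.strictMono (α := Fin 1) _, fun _ => h ▸ hx,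
        by simp [signedLabelling]⟩
  · obtain ⟨hcard, hL, -⟩ := hm.elim card_overL_not_hasCompl_nodup_of_mem_alt
      card_overL_not_hasCompl_nodup_of_mem_alt
    exact ⟨hcard, hL⟩

lemma M_eq_alt_union (n i : ℕ) : M n i = alt n i 0 ∪ alt n i 1 := by
  induction i with
  | zero => exact M_zero_eq n
  | succ i ih => exact M_succ_eq (halves_of_M_eq_union ih).1

lemma alt_eq_empty_of_le {n i ε : ℕ} (h : n ≤ i) : alt n i ε = ∅ := by
  refine Set.eq_empty_of_forall_notMem fun m ⟨k, hk, hb, _⟩ => ?_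
  have := Finset.card_le_card_of_injOn k (s := Finset.univ) (t := Finset.Icc 1 (n : ℤ))
    (fun j _ => by simp [hb j]) hk.injective.injOn
  simp only [Finset.card_univ, Fintype.card_fin, Int.card_Icc] at this
  omega

theorem fan_parity_characterization_general (n : ℕ) :
    (∀ i ≤ n - 1,
      Mp n i = alt n i 0 ∧ M n i \ Mp n i = alt n i 1) ∧ M n n = ∅ := by
  refine ⟨fun i _ => halves_of_M_eq_union (M_eq_alt_union n i), ?_⟩
  rw [M_eq_alt_union, alt_eq_empty_of_le le_rfl, alt_eq_empty_of_le le_rfl, Set.union_empty]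

/-- In Ky Fan's parity proof of Tucker's lemma (label set
`{±1, …, ±n}`, forbidden labellings those with a complementary pair, partition rule
"the element of least absolute value is positive"), for every `0 ≤ i ≤ n − 1` the
positive half `Mⁱ₊` consists exactly of the alternating labellings
`{k₁, −k₂, …, (−1)ⁱ k_{i+1}}`, the negative half `Mⁱ₋ = Mⁱ \ Mⁱ₊` of the labellings
`{−k₁, k₂, …, (−1)^{i+1} k_{i+1}}` (with `1 ≤ k₁ < … < k_{i+1} ≤ n`), and
consequently `Mⁿ = ∅`. -/
theorem fan_parity_characterization (n : ℕ) (hn : 1 ≤ n) :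
    (∀ i ≤ n - 1,
      Mp n i = alt n i 0 ∧ M n i \ Mp n i = alt n i 1) ∧ M n n = ∅ :=
  fan_parity_characterization_general n
end
end

section
/- Tucker's lemma implies the Octahedral Sperner lemma with Octahedral Labels. Precisely: suppose that for every n ≥ 1, every finite triangulation T whose underlying set X ⊆ ℝ^n is homeomorphic to the closed unit ball B^n and which is antipodally symmetric on the boundary (σ ∈ T and σ ⊆ ∂X imply −σ ∈ T), and every label function λ : V(T) → ext(◇^n) with λ(−v) = −λ(v) for all v ∈ V(T) ∩ ∂X, T contains a complementary edge. Then for every n ≥ 1, every triangulation T of ◇^n, and every label function λ : V(T) → ext(◇^n) such that for every boundary vertex x ∈ V(T) with |x_1|+…+|x_n| = 1 and every 1 ≤ i ≤ n, x_i ≥ 0 implies λ(x) ≠ −e_i and x_i ≤ 0 implies λ(x) ≠ e_i, the triangulation T contains a complementary edge. -/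
open scoped Classical

/-- **Tucker's Lemma** as a statement: for every `n ≥ 1`, every finite triangulation
`K` whose underlying set is homeomorphic to the closed unit ball `Bⁿ` and which is
antipodally symmetric on the boundary, and every labelling of the vertices by extreme
points of `◇ⁿ` that is antipodal on the boundary, `K` contains a complementary edge. -/
def TuckerStatement : Prop :=
  ∀ (n : ℕ), 1 ≤ n →
  ∀ (K : Geometry.SimplicialComplex ℝ (Fin n → ℝ)), K.faces.Finite →
  Nonempty (↥K.space ≃ₜ ↥(Metric.closedBall (0 : EuclideanSpace ℝ (Fin n)) 1)) →
  (∀ σ ∈ K.faces, (σ : Set (Fin n → ℝ)) ⊆ frontier K.space →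
    σ.image (fun v => -v) ∈ K.faces) →
  ∀ lab : (Fin n → ℝ) → (Fin n → ℝ),
  (∀ v ∈ K.vertices, lab v ∈ extOcta n) →
  (∀ v ∈ K.vertices, v ∈ frontier K.space → lab (-v) = -lab v) →
  ∃ σ ∈ K.faces, ∃ v₁ ∈ σ, ∃ v₂ ∈ σ, lab v₁ = -lab v₂

/-- **Octahedral Sperner with Octahedral Labels** as a statement: for every `n ≥ 1`,
every finite triangulation `K` of `◇ⁿ`, and every labelling of the vertices by extreme
points of `◇ⁿ` such that every boundary vertex `x` (i.e. `∑ |xᵢ| = 1`) satisfies, for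
each `i`, `xᵢ ≥ 0 → lab x ≠ −eᵢ` and `xᵢ ≤ 0 → lab x ≠ eᵢ`, `K` contains a
complementary edge. -/
def OctahedralSpernerStatement : Prop :=
  ∀ (n : ℕ), 1 ≤ n →
  ∀ (K : Geometry.SimplicialComplex ℝ (Fin n → ℝ)), K.faces.Finite →
  K.space = octa n →
  ∀ lab : (Fin n → ℝ) → (Fin n → ℝ),
  (∀ x ∈ K.vertices, lab x ∈ extOcta n) →
  (∀ x ∈ K.vertices, (∑ i, |x i|) = 1 → ∀ i : Fin n,
    (0 ≤ x i → lab x ≠ -Pi.single i 1) ∧ (x i ≤ 0 → lab x ≠ Pi.single i 1)) →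
  ∃ σ ∈ K.faces, ∃ v₁ ∈ σ, ∃ v₂ ∈ σ, lab v₁ = -lab v₂

/-!
Extend the triangulation `K` of `◇ⁿ` by a collar triangulating the shell `1 ≤ ‖x‖₁ ≤ 2`. For a
sign vector `ε` and an index `j`, the cells over the face `facet ε j` of `∂◇ⁿ`, spanned by the
`εᵢ eᵢ` with `j ≤ i`, are the joins of the chain `2ε₀e₀, …, 2εⱼeⱼ` with the faces of `K` lying in
that face. A point of such a cell is `z = ∑ αᵢ • 2εᵢeᵢ + u` with `u` in the cone over the face,
and then `|zᵢ| = 2αᵢ + |uᵢ|` and `‖z‖₁ = 1 + ∑ αᵢ`. These identities determine `α` and `u` from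
`z`, which is why the cells glue to each other and to `K`.

The result triangulates `2◇ⁿ`, a ball, and its boundary consists of the outer chains, so it is
antipodally symmetric. Labelling `2εᵢeᵢ` by `εᵢeᵢ` is odd on the boundary, and Tucker's lemma
gives a complementary edge. It cannot join two outer vertices, whose labels share the signs `ε`,
nor an outer vertex `2εᵢeᵢ` and a vertex `v` of `K` in the same cell: there `εᵢvᵢ ≥ 0`, and the
Sperner condition forbids the label `-εᵢeᵢ`. So it is an edge of `K`.
-/

open Finset

section General

variable {E : Type*} [AddCommGroup E] [Module ℝ E]

theorem sum_smul_add_smul_mem_convexHull {ι : Type*} [Fintype ι] {S : Set E} {α : ι → ℝ}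
    {p : ι → E} {b : ℝ} {y : E} (hα : ∀ i, 0 ≤ α i) (hb : 0 ≤ b) (hsum : ∑ i, α i + b = 1)
    (hp : ∀ i, α i ≠ 0 → p i ∈ S) (hy : b ≠ 0 → y ∈ convexHull ℝ S) :
    ∑ i, α i • p i + b • y ∈ convexHull ℝ S := by
  have := (convex_convexHull ℝ S).finsum_mem (w := fun o : Option ι => o.elim b α)
    (z := fun o => o.elim y p) (by rintro (_ | i) <;> simp [hb, hα])
    (by simpa [finsum_eq_sum_of_fintype, Fintype.sum_option, add_comm] using hsum)
    (by rintro (_ | i) h; exacts [hy h, subset_convexHull ℝ S (hp i h)])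
  simpa [finsum_eq_sum_of_fintype, Fintype.sum_option, add_comm] using this

theorem mem_convexHull_filter_of_le_s13 {s : Finset E} (f : E →ₗ[ℝ] ℝ) {c : ℝ}
    (hf : ∀ x ∈ s, f x ≤ c) {y : E} (hy : y ∈ convexHull ℝ (s : Set E)) (hfy : f y = c) :
    y ∈ convexHull ℝ (s.filter (f · = c) : Set E) := by
  obtain ⟨w, hw₀, hw₁, rfl⟩ := Finset.mem_convexHull'.1 hy
  have hslack : ∑ x ∈ s, w x * (c - f x) = 0 := by
    rw [← hfy]
    simp only [mul_sub, Finset.sum_sub_distrib, ← Finset.sum_mul, hw₁, one_mul, map_sum, map_smul,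
      smul_eq_mul, sub_self]
  have hzero : ∀ x ∈ s, w x ≠ 0 → f x = c := fun x hx hwx => by
    have := (Finset.sum_eq_zero_iff_of_nonneg fun x hx => mul_nonneg (hw₀ x hx)
      (sub_nonneg.2 (hf x hx))).1 hslack x hx
    linarith [(mul_eq_zero.1 this).resolve_left hwx]
  refine Finset.mem_convexHull'.2 ⟨w, fun x hx => hw₀ x (Finset.mem_filter.1 hx).1, ?_, ?_⟩
  · rwa [Finset.sum_filter_of_ne hzero]
  · exact Finset.sum_filter_of_ne fun x hx hne => hzero x hx fun h => hne (by simp [h])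

theorem affineIndependent_insert_of_forall_eq [DecidableEq E] {s : Finset E}
    (hs : AffineIndependent ℝ ((↑) : s → E)) (f : E →ₗ[ℝ] ℝ) {c : ℝ} (hf : ∀ x ∈ s, f x = c)
    {p : E} (hp : f p ≠ c) : AffineIndependent ℝ ((↑) : ↥(insert p s) → E) := by
  by_contra h
  obtain ⟨w, hw, hw₀, x, hx, hwx⟩ := exists_nontrivial_relation_sum_zero_of_not_affine_ind h
  have hps : p ∉ s := fun hps => hp (hf p hps)
  rw [Finset.sum_insert hps] at hw hw₀
  have hf_sum : w p * f p + (∑ x ∈ s, w x) * c = 0 := by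
    have := congrArg f hw
    simp only [map_add, map_sum, map_smul, smul_eq_mul, map_zero] at this
    rwa [Finset.sum_congr rfl fun x hx => by rw [hf x hx], ← Finset.sum_mul] at this
  have hwp : w p = 0 := by
    have : w p * (f p - c) = 0 := by linear_combination hf_sum - c * hw₀
    exact (mul_eq_zero.1 this).resolve_right (sub_ne_zero.2 hp)
  rw [hwp, zero_smul, zero_add] at hw
  rw [hwp, zero_add] at hw₀
  rcases Finset.mem_insert.1 hx with rfl | hx
  · exact hwx hwp
  · exact hwx (hs.eq_zero_of_sum_eq_zero_subtype hw₀ hw x hx)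

theorem affineIndependent_image_single_union {ι : Type*} [DecidableEq ι] [DecidableEq (ι → ℝ)]
    {c : ι → ℝ}
    {s : Finset (ι → ℝ)} (hs : AffineIndependent ℝ ((↑) : s → ι → ℝ)) (J : Finset ι)
    (hc : ∀ i ∈ J, c i ≠ 0) (hsJ : ∀ x ∈ s, ∀ i ∈ J, x i = 0) :
    AffineIndependent ℝ
      ((↑) : ↥(J.image (fun i => Pi.single i (c i)) ∪ s) → ι → ℝ) := by
  induction J using Finset.induction_on with
  | empty => rwa [Finset.image_empty, Finset.empty_union]
  | insert i J hiJ ih =>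
    rw [Finset.image_insert, Finset.insert_union]
    refine affineIndependent_insert_of_forall_eq
      (ih (fun j hj => hc j (mem_insert_of_mem hj))
        fun x hx j hj => hsJ x hx j (mem_insert_of_mem hj))
      (LinearMap.proj i) (c := 0) ?_ (by simpa using hc i (mem_insert_self i J))
    intro x hx
    rcases Finset.mem_union.1 hx with hx | hx
    · obtain ⟨j, hj, rfl⟩ := Finset.mem_image.1 hx
      simp [show i ≠ j from fun h => hiJ (h ▸ hj)]
    · exact hsJ x hx i (mem_insert_self i J)

end General

theorem exists_greedy_split {a : ℕ → ℝ} (ha : ∀ i, 0 ≤ a i) {c : ℝ} (hc : 0 < c) :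
    ∀ {m : ℕ}, c ≤ ∑ i ∈ range m, a i → ∃ j < m, ∃ β : ℕ → ℝ,
      (∀ i, 0 ≤ β i ∧ β i ≤ a i) ∧ (∀ i < j, β i = a i) ∧ (∀ i, j < i → β i = 0) ∧
        ∑ i ∈ range m, β i = c
  | 0, h => absurd h (by simpa using hc)
  | m + 1, h => by
    by_cases hm : c ≤ ∑ i ∈ range m, a i
    · obtain ⟨j, hj, β, hβ, hlow, hhigh, hsum⟩ := exists_greedy_split ha hc hm
      exact ⟨j, by omega, β, hβ, hlow, hhigh, by rw [sum_range_succ, hsum, hhigh m hj, add_zero]⟩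
    · push Not at hm
      rw [sum_range_succ] at h
      refine ⟨m, by omega, fun i => if i < m then a i else if i = m then c - ∑ i ∈ range m, a i
        else 0, fun i => ?_, fun i hi => if_pos hi, fun i hi => ?_, ?_⟩
      · dsimp only
        split_ifs with h₁ h₂ <;> (try subst h₂) <;> constructor <;> linarith [ha i]
      · dsimp only
        rw [if_neg (by omega), if_neg (by omega)]
      · rw [sum_range_succ, if_neg (lt_irrefl m), if_pos rfl,
          sum_congr rfl fun i hi => if_pos (mem_range.1 hi)]
        ring

theorem nonempty_homeomorph_closedBall {E F : Type*} [NormedAddCommGroup E] [NormedSpace ℝ E]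
    [NormedAddCommGroup F] [NormedSpace ℝ F] (e : E ≃L[ℝ] F) {S : Set E} (hconv : Convex ℝ S)
    (hclosed : IsClosed S) (hbdd : Bornology.IsBounded S) (hint : (interior S).Nonempty) :
    Nonempty (S ≃ₜ Metric.closedBall (0 : F) 1) := by
  have himage_interior : e '' interior S = interior (e '' S) := e.toHomeomorph.image_interior S
  have hclosed' : IsClosed (e '' S) := e.toHomeomorph.isClosed_image.2 hclosed
  obtain ⟨h, -, hcl, -⟩ := exists_homeomorph_image_interior_closure_frontier_eq_unitBall
    (hconv.linear_image (e : E →ₗ[ℝ] F)) (himage_interior ▸ hint.image e)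
    (e.lipschitz.isBounded_image hbdd)
  change h '' closure (e '' S) = _ at hcl
  rw [hclosed'.closure_eq] at hcl
  exact ⟨(e.toHomeomorph.image S).trans ((h.image _).trans (Homeomorph.setCongr hcl))⟩

namespace OctahedralCollar

variable {n : ℕ}

def l1norm (x : Fin n → ℝ) : ℝ := ∑ i, |x i|

theorem l1norm_nonneg (x : Fin n → ℝ) : 0 ≤ l1norm x :=
  sum_nonneg fun i _ => abs_nonneg (x i)

theorem abs_le_l1norm (x : Fin n → ℝ) (i : Fin n) : |x i| ≤ l1norm x :=
  single_le_sum (fun j _ => abs_nonneg (x j)) (mem_univ i)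

theorem l1norm_eq_zero {x : Fin n → ℝ} : l1norm x = 0 ↔ x = 0 := by
  simp [l1norm, sum_eq_zero_iff_of_nonneg, funext_iff]

theorem l1norm_smul (c : ℝ) (x : Fin n → ℝ) : l1norm (c • x) = |c| * l1norm x := by
  simp [l1norm, abs_mul, mul_sum]

theorem l1norm_neg (x : Fin n → ℝ) : l1norm (-x) = l1norm x := by
  simp [l1norm]

theorem l1norm_smul_inv_smul (u : Fin n → ℝ) : l1norm u • (l1norm u)⁻¹ • u = u := by
  rcases eq_or_ne u 0 with rfl | hu
  · simp
  · exact smul_inv_smul₀ (mt l1norm_eq_zero.1 hu) u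

theorem continuous_l1norm : Continuous (l1norm (n := n)) := by
  unfold l1norm
  fun_prop

theorem convex_setOf_l1norm_le (c : ℝ) : Convex ℝ {x : Fin n → ℝ | l1norm x ≤ c} := by
  intro x hx y hy a b ha hb hab
  calc l1norm (a • x + b • y) ≤ a * l1norm x + b * l1norm y := by
        simp only [l1norm, mul_sum, ← sum_add_distrib]
        gcongr with i
        simpa [abs_mul, abs_of_nonneg ha, abs_of_nonneg hb] using abs_add_le (a * x i) (b * y i)
    _ ≤ a * c + b * c := by gcongr <;> assumption
    _ = c := by rw [← add_mul, hab, one_mul]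

def IsSignVector (ε : Fin n → ℝ) : Prop := ∀ i, |ε i| = 1

namespace IsSignVector

variable {ε : Fin n → ℝ} (hε : IsSignVector ε)
include hε

theorem mul_self (i : Fin n) : ε i * ε i = 1 := by
  rw [← abs_mul_abs_self, hε i, one_mul]

theorem ne_zero (i : Fin n) : ε i ≠ 0 := fun h => by
  simpa [h] using hε i

theorem eq_one_or_eq_neg_one (i : Fin n) : ε i = 1 ∨ ε i = -1 :=
  (abs_eq zero_le_one).1 (hε i)

theorem neg : IsSignVector (-ε) := fun i => by simpa using hε i

theorem abs_mul (i : Fin n) (x : ℝ) : |ε i * x| = |x| := by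
  rw [_root_.abs_mul, hε i, one_mul]

theorem mul_eq_abs {i : Fin n} {x : ℝ} (hx : 0 ≤ ε i * x) : ε i * x = |x| := by
  rw [← hε.abs_mul i x, abs_of_nonneg hx]

theorem mul_le_abs (i : Fin n) (x : ℝ) : ε i * x ≤ |x| :=
  (le_abs_self _).trans (hε.abs_mul i x).le

end IsSignVector

def outerVertex (ε : Fin n → ℝ) (i : Fin n) : Fin n → ℝ := Pi.single i (2 * ε i)

noncomputable def outerChain (ε : Fin n → ℝ) (j : Fin n) : Finset (Fin n → ℝ) :=
  (univ.filter (· ≤ j)).image (outerVertex ε)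

theorem mem_outerChain {ε : Fin n → ℝ} {j : Fin n} {x : Fin n → ℝ} :
    x ∈ outerChain ε j ↔ ∃ i ≤ j, outerVertex ε i = x := by
  simp [outerChain]

theorem sum_smul_outerVertex (α ε : Fin n → ℝ) :
    ∑ i, α i • outerVertex ε i = fun j => 2 * α j * ε j := by
  simp only [outerVertex, ← Pi.single_smul', smul_eq_mul]
  rw [Finset.univ_sum_single]
  ext j; ring

theorem neg_outerVertex (ε : Fin n → ℝ) (i : Fin n) :
    -outerVertex ε i = outerVertex (-ε) i := by
  simp [outerVertex, Pi.single_neg]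

theorem l1norm_outerVertex {ε : Fin n → ℝ} (hε : IsSignVector ε) (i : Fin n) :
    l1norm (outerVertex ε i) = 2 := by
  rw [l1norm, sum_eq_single i (fun k _ hk => by simp [outerVertex, hk]) (by simp)]
  simp [outerVertex, abs_mul, hε i]

/-- The cone over the face of `◇ⁿ` spanned by the points `ε i • eᵢ` with `j ≤ i`. -/
def facetCone (ε : Fin n → ℝ) (j : Fin n) : Set (Fin n → ℝ) :=
  {u | (∀ i, 0 ≤ ε i * u i) ∧ ∀ i < j, u i = 0}

def facet (ε : Fin n → ℝ) (j : Fin n) : Set (Fin n → ℝ) :=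
  {x | x ∈ facetCone ε j ∧ l1norm x = 1}

/-- The linear form exposing `facet ε j` as a face of `◇ⁿ`. -/
noncomputable def facetForm (ε : Fin n → ℝ) (j : Fin n) : (Fin n → ℝ) →ₗ[ℝ] ℝ :=
  ∑ i ∈ Ici j, ε i • LinearMap.proj i

section Facet

variable {ε : Fin n → ℝ} {j : Fin n}

theorem facetForm_apply (x : Fin n → ℝ) : facetForm ε j x = ∑ i ∈ Ici j, ε i * x i := by
  simp [facetForm]

theorem smul_mem_facetCone {c : ℝ} (hc : 0 ≤ c) {u : Fin n → ℝ} (hu : u ∈ facetCone ε j) :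
    c • u ∈ facetCone ε j :=
  ⟨fun i => by simpa [mul_left_comm] using mul_nonneg hc (hu.1 i), fun i hi => by simp [hu.2 i hi]⟩

theorem sum_smul_mem_facetCone {t : Finset (Fin n → ℝ)} {w : (Fin n → ℝ) → ℝ}
    (hw : ∀ v ∈ t, 0 ≤ w v) (ht : ∀ v ∈ t, v ∈ facetCone ε j) :
    ∑ v ∈ t, w v • v ∈ facetCone ε j := by
  refine ⟨fun i => ?_, fun i hi => ?_⟩
  · simpa [Finset.sum_apply, mul_sum, mul_left_comm] using
      sum_nonneg fun v hv => mul_nonneg (hw v hv) ((ht v hv).1 i)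
  · simp only [Finset.sum_apply, Pi.smul_apply, smul_eq_mul]
    exact sum_eq_zero fun v hv => by rw [(ht v hv).2 i hi, mul_zero]

theorem facetForm_le_l1norm (hε : IsSignVector ε) (x : Fin n → ℝ) :
    facetForm ε j x ≤ l1norm x := by
  rw [facetForm_apply, l1norm]
  exact (sum_le_sum fun i _ => hε.mul_le_abs i (x i)).trans
    (sum_le_sum_of_subset_of_nonneg (subset_univ _) fun i _ _ => abs_nonneg (x i))

theorem facetForm_eq_l1norm (hε : IsSignVector ε) {u : Fin n → ℝ} (hu : u ∈ facetCone ε j) :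
    facetForm ε j u = l1norm u := by
  rw [facetForm_apply, l1norm, sum_congr rfl fun i _ => hε.mul_eq_abs (hu.1 i)]
  exact sum_subset (subset_univ _) fun i _ hi => by simp [hu.2 i (by simpa using hi)]

theorem mem_facet_of_facetForm_eq_one (hε : IsSignVector ε) {x : Fin n → ℝ}
    (hx : l1norm x ≤ 1) (h : facetForm ε j x = 1) : x ∈ facet ε j := by
  have hle := facetForm_le_l1norm hε x (j := j)
  rw [facetForm_apply] at h hle
  have hsign : ∑ i ∈ Ici j, ε i * x i = ∑ i ∈ Ici j, |x i| := le_antisymm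
    (sum_le_sum fun i _ => hε.mul_le_abs i (x i))
    (h ▸ hx.trans' (sum_le_sum_of_subset_of_nonneg (subset_univ _) fun i _ _ => abs_nonneg _))
  have hrest : ∑ i ∈ (Ici j)ᶜ, |x i| = 0 := by
    have := sum_add_sum_compl (Ici j) fun i => |x i|
    rw [← hsign, h, ← l1norm] at this
    linarith [sum_nonneg fun i (_ : i ∈ (Ici j)ᶜ) => abs_nonneg (x i)]
  have hlow : ∀ i < j, x i = 0 := fun i hi => abs_eq_zero.1 <|
    (sum_eq_zero_iff_of_nonneg fun i _ => abs_nonneg (x i)).1 hrest i (by simpa using hi)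
  refine ⟨⟨fun i => ?_, hlow⟩, ?_⟩
  · rcases lt_or_ge i j with hi | hi
    · simp [hlow i hi]
    · rw [(sum_eq_sum_iff_of_le fun i _ => hε.mul_le_abs i (x i)).1 hsign i (by simpa using hi)]
      exact abs_nonneg _
  · linarith

end Facet

/-- Coordinates of a point `z` of a collar cell over `facet ε j`. -/
structure CollarCoords (ε : Fin n → ℝ) (j : Fin n) (z α u : Fin n → ℝ) : Prop where
  nonneg : ∀ i, 0 ≤ α i
  eq_zero_of_lt : ∀ i, j < i → α i = 0
  mem_facetCone : u ∈ facetCone ε j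
  l1norm_eq : l1norm u = 1 - ∑ i, α i
  eq_sum_add : z = ∑ i, α i • outerVertex ε i + u

namespace CollarCoords

variable {ε ε' : Fin n → ℝ} {j j' : Fin n} {z α α' u u' : Fin n → ℝ}

theorem apply_eq (h : CollarCoords ε j z α u) (i : Fin n) : z i = 2 * α i * ε i + u i := by
  rw [h.eq_sum_add, Pi.add_apply, sum_smul_outerVertex]

theorem mul_apply (hε : IsSignVector ε) (h : CollarCoords ε j z α u) (i : Fin n) :
    ε i * z i = 2 * α i + |u i| := by
  rw [h.apply_eq, ← hε.mul_eq_abs (h.mem_facetCone.1 i)]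
  linear_combination 2 * α i * hε.mul_self i

theorem abs_apply (hε : IsSignVector ε) (h : CollarCoords ε j z α u) (i : Fin n) :
    |z i| = 2 * α i + |u i| := by
  rw [← hε.abs_mul, h.mul_apply hε, abs_of_nonneg (by linarith [h.nonneg i, abs_nonneg (u i)])]

theorem l1norm_eq_one_add (hε : IsSignVector ε) (h : CollarCoords ε j z α u) :
    l1norm z = 1 + ∑ i, α i := by
  have := h.l1norm_eq
  simp only [l1norm, h.abs_apply hε, sum_add_distrib, ← mul_sum] at this ⊢
  linarith

theorem sign_eq (hε : IsSignVector ε) (hε' : IsSignVector ε') (h : CollarCoords ε j z α u)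
    (h' : CollarCoords ε' j' z α' u') {i : Fin n} (hi : α i ≠ 0) : ε i = ε' i := by
  have hpos : 0 < |z i| := by
    rw [h.abs_apply hε]; linarith [(h.nonneg i).lt_of_ne' hi, abs_nonneg (u i)]
  refine mul_right_cancel₀ (abs_pos.1 hpos) ?_
  rw [h.mul_apply hε, h'.mul_apply hε', ← h.abs_apply hε, ← h'.abs_apply hε']

theorem weights_eq (hε : IsSignVector ε) (hε' : IsSignVector ε') (h : CollarCoords ε j z α u)
    (h' : CollarCoords ε' j' z α' u') (hjj : j ≤ j') : α = α' := by
  have habs (i : Fin n) : 2 * α i + |u i| = 2 * α' i + |u' i| := by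
    rw [← h.abs_apply hε, ← h'.abs_apply hε']
  have hsum : ∑ i, α i = ∑ i, α' i := by
    linarith [h.l1norm_eq_one_add hε, h'.l1norm_eq_one_add hε']
  have hlow : ∀ i < j, α i = α' i := fun i hi => by
    have := habs i
    rw [h.mem_facetCone.2 i hi, h'.mem_facetCone.2 i (hi.trans_le hjj)] at this
    linarith
  rcases hjj.lt_or_eq with hlt | rfl
  · have hle : ∀ i ∈ univ, α i ≤ α' i := fun i _ => by
      rcases lt_trichotomy i j with hi | rfl | hi
      · exact (hlow i hi).le
      · have := habs i
        rw [h'.mem_facetCone.2 i hlt, abs_zero] at this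
        linarith [abs_nonneg (u i)]
      · exact (h.eq_zero_of_lt i hi).trans_le (h'.nonneg i)
    funext i
    exact (sum_eq_sum_iff_of_le hle).1 hsum i (mem_univ i)
  · have hoff : ∀ i ≠ j, α i = α' i := fun i hi => hi.lt_or_gt.elim (hlow i) fun hgt => by
      rw [h.eq_zero_of_lt i hgt, h'.eq_zero_of_lt i hgt]
    funext i
    rcases eq_or_ne i j with rfl | hi
    · have := sum_eq_single (f := fun i' => α i' - α' i') i
        (fun i' _ hi' => sub_eq_zero.2 (hoff i' hi')) (absurd (mem_univ i))
      rw [sum_sub_distrib, hsum, sub_self] at this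
      linarith
    · exact hoff i hi

theorem inner_eq (hε : IsSignVector ε) (hε' : IsSignVector ε') (h : CollarCoords ε j z α u)
    (h' : CollarCoords ε' j' z α' u') (hjj : j ≤ j') : u = u' := by
  have hα := h.weights_eq hε hε' h' hjj
  have hsum : ∑ i, α i • outerVertex ε i = ∑ i, α' i • outerVertex ε' i := by
    rw [sum_smul_outerVertex, sum_smul_outerVertex, ← hα]
    funext i
    rcases eq_or_ne (α i) 0 with hi | hi
    · simp [hi]
    · rw [h.sign_eq hε hε' h' hi]
  have := h.eq_sum_add.symm.trans h'.eq_sum_add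
  rwa [hsum, add_right_inj] at this

end CollarCoords

theorem exists_collarCoords {z : Fin n → ℝ} (h₁ : 1 < l1norm z) (h₂ : l1norm z ≤ 2) :
    ∃ ε j α u, IsSignVector ε ∧ CollarCoords ε j z α u := by
  set ε : Fin n → ℝ := fun i => if z i < 0 then -1 else 1
  have hε : IsSignVector ε := fun i => by simp only [ε]; split_ifs <;> simp
  have hεz (i : Fin n) : ε i * z i = |z i| := by
    simp only [ε]
    split_ifs with h
    · rw [abs_of_neg h]; ring
    · rw [abs_of_nonneg (not_lt.1 h)]; ring
  set a : ℕ → ℝ := fun i => if h : i < n then |z ⟨i, h⟩| / 2 else 0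
  have ha (i : Fin n) : a i = |z i| / 2 := dif_pos i.2
  have hsum_a : ∑ i ∈ range n, a i = l1norm z / 2 := by
    rw [← Fin.sum_univ_eq_sum_range, l1norm, sum_div]
    exact sum_congr rfl fun i _ => ha i
  obtain ⟨j, hj, β, hβ, hlow, hhigh, hβsum⟩ := exists_greedy_split
    (fun i => by simp only [a]; split_ifs <;> positivity) (sub_pos.2 h₁)
    (show l1norm z - 1 ≤ ∑ i ∈ range n, a i by linarith)
  have hβsum' : ∑ i : Fin n, β i = l1norm z - 1 := by rw [Fin.sum_univ_eq_sum_range β, hβsum]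
  set u := z - ∑ i : Fin n, β i • outerVertex ε i
  have hεu (i : Fin n) : ε i * u i = |z i| - 2 * β i := by
    simp only [u, Pi.sub_apply, sum_smul_outerVertex]
    linear_combination hεz i - 2 * β i * hε.mul_self i
  have hcone : u ∈ facetCone ε ⟨j, hj⟩ := by
    refine ⟨fun i => ?_, fun i hi => ?_⟩
    · rw [hεu]; linarith [(hβ i).2, ha i]
    · have : ε i * u i = 0 := by rw [hεu, hlow i hi, ha]; ring
      exact (mul_eq_zero.1 this).resolve_left (hε.ne_zero i)
  refine ⟨ε, ⟨j, hj⟩, fun i => β i, u, hε, fun i => (hβ i).1, fun i hi => hhigh i hi, hcone, ?_,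
    (add_sub_cancel _ z).symm⟩
  simp only [l1norm, ← hε.mul_eq_abs (hcone.1 _), hεu, sum_sub_distrib, ← mul_sum, hβsum']
  rw [← l1norm]
  ring

theorem sum_eq_sum_outerVertex_add_sum_inter {M : Type*} [AddCommMonoid M] {ε : Fin n → ℝ}
    {j : Fin n} {σ s : Finset (Fin n → ℝ)} (hε : IsSignVector ε) (hσ : ∀ v ∈ σ, v ∈ facet ε j)
    (hs : s ⊆ outerChain ε j ∪ σ) (g : (Fin n → ℝ) → M) :
    ∑ x ∈ s, g x = ∑ i, (if i ≤ j ∧ outerVertex ε i ∈ s then g (outerVertex ε i) else 0) +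
      ∑ x ∈ s ∩ σ, g x := by
  set I := univ.filter fun i => i ≤ j ∧ outerVertex ε i ∈ s with hI
  have hdecomp : s = I.image (outerVertex ε) ∪ s ∩ σ := by
    ext x
    constructor
    · intro hx
      rcases mem_union.1 (hs hx) with hc | hσx
      · obtain ⟨i, hi, rfl⟩ := mem_outerChain.1 hc
        exact mem_union_left _ (mem_image.2 ⟨i, by simp [hI, hi, hx]⟩)
      · exact mem_union_right _ (mem_inter.2 ⟨hx, hσx⟩)
    · simp only [hI, mem_union, mem_image, mem_filter, mem_univ, true_and, mem_inter]
      rintro (⟨i, ⟨-, hi⟩, rfl⟩ | ⟨hx, -⟩) <;> assumption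
  have hdisj : Disjoint (I.image (outerVertex ε)) (s ∩ σ) := by
    refine disjoint_left.2 fun x hx hxσ => ?_
    obtain ⟨i, -, rfl⟩ := mem_image.1 hx
    have := (hσ _ (mem_inter.1 hxσ).2).2
    rw [l1norm_outerVertex hε] at this
    norm_num at this
  have hinj : Set.InjOn (outerVertex ε) I := fun i _ i' _ h => by
    by_contra hne
    have := congrFun h i
    simp [outerVertex, hne, hε.ne_zero i] at this
  conv_lhs => rw [hdecomp]
  rw [sum_union hdisj, sum_image hinj, sum_filter]

theorem exists_collarCoords_of_mem_convexHull {ε : Fin n → ℝ} {j : Fin n}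
    {σ s : Finset (Fin n → ℝ)} {z : Fin n → ℝ} (hε : IsSignVector ε)
    (hσ : ∀ v ∈ σ, v ∈ facet ε j) (hs : s ⊆ outerChain ε j ∪ σ)
    (hz : z ∈ convexHull ℝ (s : Set (Fin n → ℝ))) :
    ∃ α u, CollarCoords ε j z α u ∧ (∀ i, α i ≠ 0 → outerVertex ε i ∈ s) ∧
      (u ≠ 0 → (l1norm u)⁻¹ • u ∈ convexHull ℝ (↑(s ∩ σ) : Set (Fin n → ℝ))) := by
  obtain ⟨w, hw₀, hw₁, rfl⟩ := Finset.mem_convexHull'.1 hz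
  set α : Fin n → ℝ := fun i => if i ≤ j ∧ outerVertex ε i ∈ s then w (outerVertex ε i) else 0
  set u := ∑ v ∈ s ∩ σ, w v • v
  have hw₀' : ∀ v ∈ s ∩ σ, 0 ≤ w v := fun v hv => hw₀ v (mem_inter.1 hv).1
  have hcone : u ∈ facetCone ε j :=
    sum_smul_mem_facetCone hw₀' fun v hv => (hσ v (mem_inter.1 hv).2).1
  have hu : l1norm u = ∑ v ∈ s ∩ σ, w v := by
    rw [← facetForm_eq_l1norm hε hcone, map_sum]
    refine sum_congr rfl fun v hv => ?_
    have hv := hσ v (mem_inter.1 hv).2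
    rw [map_smul, facetForm_eq_l1norm hε hv.1, hv.2, smul_eq_mul, mul_one]
  refine ⟨α, u, ⟨fun i => ?_, fun i hi => if_neg fun h => hi.not_ge h.1, hcone, ?_, ?_⟩, ?_, ?_⟩
  · simp only [α]; split_ifs with h
    exacts [hw₀ _ h.2, le_rfl]
  · rw [hu, ← hw₁, sum_eq_sum_outerVertex_add_sum_inter hε hσ hs w]; ring
  · rw [sum_eq_sum_outerVertex_add_sum_inter hε hσ hs fun x => w x • x]
    simp only [α, u, ite_smul, zero_smul]
  · intro i hi
    by_contra h
    exact hi (if_neg fun h' => h h'.2)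
  · intro hu0
    have hpos : 0 < ∑ v ∈ s ∩ σ, w v := hu ▸ (l1norm_nonneg u).lt_of_ne' (mt l1norm_eq_zero.1 hu0)
    rw [hu]
    exact (s ∩ σ).centerMass_id_mem_convexHull hw₀' hpos

section Collar

variable {K : Geometry.SimplicialComplex ℝ (Fin n → ℝ)} {ε ε' : Fin n → ℝ} {j j' : Fin n}
  {σ σ' s t : Finset (Fin n → ℝ)}

structure IsCollarCell (K : Geometry.SimplicialComplex ℝ (Fin n → ℝ)) (ε : Fin n → ℝ) (j : Fin n)
    (σ : Finset (Fin n → ℝ)) : Prop where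
  isSignVector : IsSignVector ε
  mem_faces : σ.Nonempty → σ ∈ K.faces
  subset_facet : ∀ v ∈ σ, v ∈ facet ε j

theorem isCollarCell_empty (hε : IsSignVector ε) : IsCollarCell K ε j ∅ :=
  ⟨hε, fun h => absurd h Finset.not_nonempty_empty, by simp⟩

theorem IsCollarCell.inter_mem_faces (hc : IsCollarCell K ε j σ) {y : Fin n → ℝ}
    (hy : y ∈ convexHull ℝ (↑(s ∩ σ) : Set (Fin n → ℝ))) : s ∩ σ ∈ K.faces := by
  have hne : (s ∩ σ).Nonempty := Finset.coe_nonempty.1 (convexHull_nonempty_iff.1 ⟨y, hy⟩)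
  exact K.down_closed (hc.mem_faces (hne.mono inter_subset_right)) inter_subset_right hne

theorem outerVertex_mem_facetCone {i : Fin n} (hi : j ≤ i) :
    outerVertex ε i ∈ facetCone ε j := by
  refine ⟨fun k => ?_, fun k hk => ?_⟩
  · rcases eq_or_ne k i with rfl | hk
    · simp only [outerVertex, Pi.single_eq_same]
      nlinarith [mul_self_nonneg (ε k)]
    · simp [outerVertex, hk]
  · simp [outerVertex, (hk.trans_le hi).ne]

theorem IsCollarCell.affineIndependent (hc : IsCollarCell K ε j σ) :
    AffineIndependent ℝ ((↑) : ↥(outerChain ε j ∪ σ) → Fin n → ℝ) := by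
  have hε := hc.isSignVector
  have hσ : AffineIndependent ℝ ((↑) : σ → Fin n → ℝ) := by
    rcases σ.eq_empty_or_nonempty with rfl | hne
    · exact affineIndependent_of_subsingleton ℝ _
    · exact K.indep (hc.mem_faces hne)
  have hfacet : ∀ v ∈ σ, facetForm ε j v = 1 := fun v hv => by
    rw [facetForm_eq_l1norm hε (hc.subset_facet v hv).1, (hc.subset_facet v hv).2]
  have hins := affineIndependent_insert_of_forall_eq hσ (facetForm ε j) hfacet
    (p := outerVertex ε j) (by
      rw [facetForm_eq_l1norm hε (outerVertex_mem_facetCone le_rfl), l1norm_outerVertex hε]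
      norm_num)
  have hcells : outerChain ε j ∪ σ =
      (Iio j).image (fun i => Pi.single i (2 * ε i)) ∪ insert (outerVertex ε j) σ := by
    ext x
    simp only [mem_union, mem_outerChain, mem_image, mem_Iio, mem_insert, le_iff_lt_or_eq]
    constructor
    · rintro (⟨i, hi | rfl, rfl⟩ | hx)
      exacts [Or.inl ⟨i, hi, rfl⟩, Or.inr (Or.inl rfl), Or.inr (Or.inr hx)]
    · rintro (⟨i, hi, rfl⟩ | rfl | hx)
      exacts [Or.inl ⟨i, Or.inl hi, rfl⟩, Or.inl ⟨j, Or.inr rfl, rfl⟩, Or.inr hx]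
  rw [hcells]
  refine affineIndependent_image_single_union (c := fun i => 2 * ε i) hins (Iio j)
    (fun i _ => mul_ne_zero two_ne_zero (hε.ne_zero i)) fun x hx i hi => ?_
  rcases mem_insert.1 hx with rfl | hx
  · simp [outerVertex, (mem_Iio.1 hi).ne]
  · exact (hc.subset_facet x hx).1.2 i (mem_Iio.1 hi)

theorem IsCollarCell.convexHull_inter_subset (hc : IsCollarCell K ε j σ)
    (hc' : IsCollarCell K ε' j' σ') (hjj : j ≤ j') (hs : s ⊆ outerChain ε j ∪ σ)
    (ht : t ⊆ outerChain ε' j' ∪ σ') :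
    convexHull ℝ ↑s ∩ convexHull ℝ ↑t ⊆ convexHull ℝ (s ∩ t : Set (Fin n → ℝ)) := by
  rintro z ⟨hzs, hzt⟩
  have hε := hc.isSignVector
  have hε' := hc'.isSignVector
  obtain ⟨α, u, h, hαs, hus⟩ := exists_collarCoords_of_mem_convexHull hε hc.subset_facet hs hzs
  obtain ⟨α', u', h', hαt, hut⟩ := exists_collarCoords_of_mem_convexHull hε' hc'.subset_facet ht hzt
  obtain rfl := h.weights_eq hε hε' h' hjj
  obtain rfl := h.inner_eq hε hε' h' hjj
  rw [h.eq_sum_add, ← l1norm_smul_inv_smul u]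
  refine sum_smul_add_smul_mem_convexHull h.nonneg (l1norm_nonneg u)
    (by rw [h.l1norm_eq]; ring) (fun i hi => ?_) (fun hu => ?_)
  · refine ⟨hαs i hi, ?_⟩
    rw [outerVertex, h.sign_eq hε hε' h' hi]
    exact hαt i hi
  · have hu0 : u ≠ 0 := fun h0 => hu (by rw [h0, l1norm_eq_zero])
    refine convexHull_mono ?_ (K.inter_subset_convexHull (hc.inter_mem_faces (hus hu0))
      (hc'.inter_mem_faces (hut hu0)) ⟨hus hu0, hut hu0⟩)
    exact Set.inter_subset_inter (coe_subset.2 inter_subset_left) (coe_subset.2 inter_subset_left)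

theorem IsCollarCell.convexHull_inter_subset_of_mem_faces (hK : K.space ⊆ octa n)
    (hc : IsCollarCell K ε j σ) (hs : s ∈ K.faces) (ht : t ⊆ outerChain ε j ∪ σ) :
    convexHull ℝ ↑s ∩ convexHull ℝ ↑t ⊆ convexHull ℝ (s ∩ t : Set (Fin n → ℝ)) := by
  rintro z ⟨hzs, hzt⟩
  have hε := hc.isSignVector
  obtain ⟨α, u, h, -, hut⟩ := exists_collarCoords_of_mem_convexHull hε hc.subset_facet ht hzt
  have hz : l1norm z ≤ 1 := hK (K.convexHull_subset_space hs hzs)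
  have hα : ∀ i, α i = 0 := fun i =>
    (sum_eq_zero_iff_of_nonneg fun i _ => h.nonneg i).1
      (le_antisymm (by linarith [h.l1norm_eq_one_add hε]) (sum_nonneg fun i _ => h.nonneg i))
      i (mem_univ i)
  have hu : l1norm u = 1 := by simp [h.l1norm_eq, hα]
  have hzu : z = u := by simp [h.eq_sum_add, hα]
  have hzt' : z ∈ convexHull ℝ (↑(t ∩ σ) : Set (Fin n → ℝ)) := by
    simpa [hzu, hu] using hut (by rintro rfl; simp [l1norm] at hu)
  refine convexHull_mono ?_ (K.inter_subset_convexHull hs (hc.inter_mem_faces hzt') ⟨hzs, hzt'⟩)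
  exact Set.inter_subset_inter_right _ (coe_subset.2 inter_subset_left)

def collarFaces (K : Geometry.SimplicialComplex ℝ (Fin n → ℝ)) : Set (Finset (Fin n → ℝ)) :=
  {s | s.Nonempty ∧ (s ∈ K.faces ∨ ∃ ε j σ, IsCollarCell K ε j σ ∧ s ⊆ outerChain ε j ∪ σ)}

/-- `K` extended by the collar to a triangulation of `2 • ◇ⁿ`. -/
def collar (K : Geometry.SimplicialComplex ℝ (Fin n → ℝ)) (hK : K.space ⊆ octa n) :
    Geometry.SimplicialComplex ℝ (Fin n → ℝ) where
  faces := collarFaces K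
  isRelLowerSet_faces := by
    rintro s ⟨hne, hs | ⟨ε, j, σ, hc, hsub⟩⟩
    · exact ⟨hne, fun t hts htne => ⟨htne, Or.inl (K.down_closed hs hts htne)⟩⟩
    · exact ⟨hne, fun t hts htne => ⟨htne, Or.inr ⟨ε, j, σ, hc, hts.trans hsub⟩⟩⟩
  indep := by
    rintro s ⟨-, hs | ⟨ε, j, σ, hc, hsub⟩⟩
    · exact K.indep hs
    · exact hc.affineIndependent.mono (coe_subset.2 hsub)
  inter_subset_convexHull := by
    rintro s t ⟨-, hs | ⟨ε, j, σ, hc, hsub⟩⟩ ⟨-, ht | ⟨ε', j', σ', hc', hsub'⟩⟩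
    · exact K.inter_subset_convexHull hs ht
    · exact hc'.convexHull_inter_subset_of_mem_faces hK hs hsub'
    · intro z hz
      rw [Set.inter_comm]
      exact hc.convexHull_inter_subset_of_mem_faces hK ht hsub ⟨hz.2, hz.1⟩
    · rcases le_total j j' with hjj | hjj
      · exact hc.convexHull_inter_subset hc' hjj hsub hsub'
      · intro z hz
        rw [Set.inter_comm]
        exact hc'.convexHull_inter_subset hc hjj hsub' hsub ⟨hz.2, hz.1⟩

theorem l1norm_le_two_of_mem_collarFaces (hK : K.space ⊆ octa n) (hs : s ∈ collarFaces K)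
    {v : Fin n → ℝ} (hv : v ∈ s) : l1norm v ≤ 2 := by
  rcases hs with ⟨-, hs | ⟨ε, j, σ, hc, hsub⟩⟩
  · linarith [show l1norm v ≤ 1 from hK (K.subset_space hs hv)]
  · rcases mem_union.1 (hsub hv) with hv | hv
    · obtain ⟨i, -, rfl⟩ := mem_outerChain.1 hv
      exact (l1norm_outerVertex hc.isSignVector i).le
    · linarith [(hc.subset_facet v hv).2]

theorem inv_l1norm_smul_mem_facet {u : Fin n → ℝ} (hu : u ∈ facetCone ε j) (hu0 : u ≠ 0) :
    (l1norm u)⁻¹ • u ∈ facet ε j := by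
  have hpos : 0 < l1norm u := (l1norm_nonneg u).lt_of_ne' (mt l1norm_eq_zero.1 hu0)
  refine ⟨smul_mem_facetCone (inv_nonneg.2 hpos.le) hu, ?_⟩
  rw [l1norm_smul, abs_of_pos (inv_pos.2 hpos), inv_mul_cancel₀ hpos.ne']

theorem exists_isCollarCell_of_mem_facet (hK : K.space = octa n) (hε : IsSignVector ε)
    {y : Fin n → ℝ} (hy : y ∈ facet ε j) :
    ∃ σ, IsCollarCell K ε j σ ∧ y ∈ convexHull ℝ (σ : Set (Fin n → ℝ)) := by
  obtain ⟨τ, hτ, hyτ⟩ := K.mem_space_iff.1 (hK ▸ hy.2.le : y ∈ K.space)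
  have hτ1 (v : Fin n → ℝ) (hv : v ∈ τ) : l1norm v ≤ 1 := hK.le (K.subset_space hτ hv)
  refine ⟨τ.filter (facetForm ε j · = 1), ⟨hε, fun hne => K.down_closed hτ (filter_subset _ _) hne,
    fun v hv => ?_⟩, mem_convexHull_filter_of_le_s13 (facetForm ε j)
      (fun v hv => (facetForm_le_l1norm hε v).trans (hτ1 v hv)) hyτ ?_⟩
  · exact mem_facet_of_facetForm_eq_one hε (hτ1 v (mem_filter.1 hv).1) (mem_filter.1 hv).2
  · rw [facetForm_eq_l1norm hε hy.1, hy.2]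

theorem collar_space (hK : K.space = octa n) :
    (collar K hK.le).space = {x | l1norm x ≤ 2} := by
  refine subset_antisymm (fun z hz => ?_) fun z (hz : l1norm z ≤ 2) => ?_
  · obtain ⟨s, hs, hzs⟩ := Geometry.SimplicialComplex.mem_space_iff.1 hz
    exact convexHull_min (fun v hv => l1norm_le_two_of_mem_collarFaces hK.le hs hv)
      (convex_setOf_l1norm_le 2) hzs
  rcases le_or_gt (l1norm z) 1 with hz1 | hz1
  · obtain ⟨s, hs, hzs⟩ := K.mem_space_iff.1 (hK ▸ hz1 : z ∈ K.space)
    exact (collar K hK.le).convexHull_subset_space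
      (⟨K.nonempty_of_mem_faces hs, Or.inl hs⟩ : s ∈ collarFaces K) hzs
  obtain ⟨ε, j, α, u, hε, h⟩ := exists_collarCoords hz1 hz
  obtain ⟨σ, hσ, hyσ⟩ : ∃ σ, IsCollarCell K ε j σ ∧
      (u ≠ 0 → (l1norm u)⁻¹ • u ∈ convexHull ℝ (σ : Set (Fin n → ℝ))) := by
    by_cases hu : u = 0
    · exact ⟨∅, isCollarCell_empty hε, fun h => absurd hu h⟩
    · obtain ⟨σ, hσ, hy⟩ :=
        exists_isCollarCell_of_mem_facet hK hε (inv_l1norm_smul_mem_facet h.mem_facetCone hu)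
      exact ⟨σ, hσ, fun _ => hy⟩
  have hface : outerChain ε j ∪ σ ∈ collarFaces K :=
    ⟨⟨outerVertex ε j, mem_union_left _ (mem_outerChain.2 ⟨j, le_rfl, rfl⟩)⟩,
      Or.inr ⟨ε, j, σ, hσ, subset_rfl⟩⟩
  refine (collar K hK.le).convexHull_subset_space hface ?_
  rw [h.eq_sum_add, ← l1norm_smul_inv_smul u]
  refine sum_smul_add_smul_mem_convexHull h.nonneg (l1norm_nonneg u) (by rw [h.l1norm_eq]; ring)
    (fun i hi => ?_) fun hu => ?_
  · exact mem_union_left _ (mem_outerChain.2 ⟨i, not_lt.1 (mt (h.eq_zero_of_lt i) hi), rfl⟩)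
  · refine convexHull_mono (coe_subset.2 subset_union_right) (hyσ ?_)
    rintro rfl
    simp [l1norm] at hu

theorem l1norm_eq_two_of_mem_frontier (hK : K.space = octa n) {v : Fin n → ℝ}
    (hv : v ∈ frontier (collar K hK.le).space) : l1norm v = 2 := by
  rw [collar_space hK] at hv
  exact frontier_le_subset_eq continuous_l1norm continuous_const hv

theorem nonempty_homeomorph_collar_space (hK : K.space = octa n) :
    Nonempty ((collar K hK.le).space ≃ₜ Metric.closedBall (0 : EuclideanSpace ℝ (Fin n)) 1) := by
  rw [collar_space hK]
  refine nonempty_homeomorph_closedBall (EuclideanSpace.equiv (Fin n) ℝ).symm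
    (convex_setOf_l1norm_le 2) (isClosed_le continuous_l1norm continuous_const) ?_ ?_
  · refine (Metric.isBounded_closedBall (x := (0 : Fin n → ℝ)) (r := 2)).subset fun x hx => ?_
    rw [mem_closedBall_zero_iff, pi_norm_le_iff_of_nonneg zero_le_two]
    exact fun i => (abs_le_l1norm x i).trans hx
  · refine ⟨0, interior_maximal (fun x (hx : l1norm x < 2) => hx.le)
      (isOpen_lt continuous_l1norm continuous_const) ?_⟩
    show l1norm 0 < 2
    simp [l1norm]

theorem image_neg_mem_collarFaces (hK : K.space ⊆ octa n) (hs : s ∈ collarFaces K)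
    (h2 : ∀ v ∈ s, l1norm v = 2) : s.image (fun v => -v) ∈ collarFaces K := by
  obtain ⟨hne, hs | ⟨ε, j, σ, hc, hsub⟩⟩ := hs
  · obtain ⟨v, hv⟩ := hne
    linarith [h2 v hv, show l1norm v ≤ 1 from hK (K.subset_space hs hv)]
  refine ⟨hne.image _, Or.inr ⟨-ε, j, ∅, isCollarCell_empty hc.isSignVector.neg, ?_⟩⟩
  intro x hx
  obtain ⟨v, hv, rfl⟩ := mem_image.1 hx
  rcases mem_union.1 (hsub hv) with hv' | hv'
  · obtain ⟨i, hi, rfl⟩ := mem_outerChain.1 hv'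
    exact mem_union_left _ (mem_outerChain.2 ⟨i, hi, (neg_outerVertex ε i).symm⟩)
  · linarith [h2 v hv, (hc.subset_facet v hv').2]

theorem collarFaces_finite (hfin : K.faces.Finite) : (collarFaces K).Finite := by
  set W : Set (Fin n → ℝ) := (⋃ s ∈ K.faces, (s : Set (Fin n → ℝ))) ∪
    Set.range (fun i => Pi.single i 2) ∪ Set.range (fun i => Pi.single i (-2))
  have hW : W.Finite :=
    ((hfin.biUnion fun s _ => s.finite_toSet).union (Set.finite_range _)).union
      (Set.finite_range _)
  refine (hW.finite_subsets.preimage coe_injective.injOn).subset fun s hs => ?_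
  rcases hs with ⟨-, hs | ⟨ε, j, σ, hc, hsub⟩⟩
  · exact fun v hv => Or.inl (Or.inl (Set.mem_biUnion hs hv))
  intro v hv
  rcases mem_union.1 (hsub hv) with hv' | hv'
  · obtain ⟨i, -, rfl⟩ := mem_outerChain.1 hv'
    rcases hc.isSignVector.eq_one_or_eq_neg_one i with hi | hi
    · exact Or.inl (Or.inr ⟨i, by simp [outerVertex, hi]⟩)
    · exact Or.inr ⟨i, by simp [outerVertex, hi]⟩
  · exact Or.inl (Or.inl (Set.mem_biUnion (hc.mem_faces ⟨v, hv'⟩) hv'))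

end Collar

noncomputable def extendLabel (lab : (Fin n → ℝ) → Fin n → ℝ) (x : Fin n → ℝ) : Fin n → ℝ :=
  if l1norm x ≤ 1 then lab x else (2⁻¹ : ℝ) • x

def SpernerBoundaryCondition (K : Geometry.SimplicialComplex ℝ (Fin n → ℝ))
    (lab : (Fin n → ℝ) → Fin n → ℝ) : Prop :=
  ∀ x ∈ K.vertices, (∑ i, |x i|) = 1 → ∀ i : Fin n,
    (0 ≤ x i → lab x ≠ -Pi.single i 1) ∧ (x i ≤ 0 → lab x ≠ Pi.single i 1)

section Labels

variable {K : Geometry.SimplicialComplex ℝ (Fin n → ℝ)} {lab : (Fin n → ℝ) → Fin n → ℝ}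
  {ε : Fin n → ℝ} {j : Fin n} {σ : Finset (Fin n → ℝ)}

theorem extendLabel_of_l1norm_le {x : Fin n → ℝ} (hx : l1norm x ≤ 1) :
    extendLabel lab x = lab x :=
  if_pos hx

theorem extendLabel_outerVertex (hε : IsSignVector ε) (i : Fin n) :
    extendLabel lab (outerVertex ε i) = Pi.single i (ε i) := by
  rw [extendLabel, if_neg (by rw [l1norm_outerVertex hε]; norm_num), outerVertex,
    ← Pi.single_smul', smul_eq_mul, inv_mul_cancel_left₀ two_ne_zero]

theorem extendLabel_neg {x : Fin n → ℝ} (hx : l1norm x = 2) :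
    extendLabel lab (-x) = -extendLabel lab x := by
  have hx' : ¬l1norm x ≤ 1 := by rw [hx]; norm_num
  rw [extendLabel, extendLabel, l1norm_neg, if_neg hx', if_neg hx', smul_neg]

theorem IsCollarCell.mem_vertices (hc : IsCollarCell K ε j σ) {v : Fin n → ℝ} (hv : v ∈ σ) :
    v ∈ K.vertices :=
  K.down_closed (hc.mem_faces ⟨v, hv⟩) (singleton_subset_iff.2 hv) (singleton_nonempty v)

theorem extendLabel_mem_extOcta (hK : K.space ⊆ octa n)
    (hlab : ∀ v ∈ K.vertices, lab v ∈ extOcta n) {v : Fin n → ℝ}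
    (hv : v ∈ (collar K hK).vertices) : extendLabel lab v ∈ extOcta n := by
  obtain ⟨-, hv | ⟨ε, j, σ, hc, hsub⟩⟩ := (hv : {v} ∈ collarFaces K)
  · rw [extendLabel_of_l1norm_le (hK (K.subset_space hv (mem_singleton_self v)))]
    exact hlab v hv
  rcases mem_union.1 (hsub (mem_singleton_self v)) with hv | hv
  · obtain ⟨i, -, rfl⟩ := mem_outerChain.1 hv
    rw [extendLabel_outerVertex hc.isSignVector]
    refine ⟨i, (hc.isSignVector.eq_one_or_eq_neg_one i).imp (congrArg _) fun h => ?_⟩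
    rw [h, Pi.single_neg]
  · rw [extendLabel_of_l1norm_le (hc.subset_facet v hv).2.le]
    exact hlab v (hc.mem_vertices hv)

theorem IsCollarCell.lab_ne_neg_single (hc : IsCollarCell K ε j σ)
    (hbdry : SpernerBoundaryCondition K lab)
    {v : Fin n → ℝ} (hv : v ∈ σ) (i : Fin n) : lab v ≠ -Pi.single i (ε i) := by
  have hfacet := hc.subset_facet v hv
  have hsign := hfacet.1.1 i
  have hbdry := hbdry v (hc.mem_vertices hv) hfacet.2 i
  rcases hc.isSignVector.eq_one_or_eq_neg_one i with hi | hi <;> rw [hi] at hsign ⊢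
  · exact hbdry.1 (by linarith)
  · rw [Pi.single_neg, neg_neg]
    exact hbdry.2 (by linarith)

theorem IsCollarCell.extendLabel_outerVertex_ne_neg (hc : IsCollarCell K ε j σ)
    (hbdry : SpernerBoundaryCondition K lab)
    (i : Fin n) {x : Fin n → ℝ} (hx : x ∈ outerChain ε j ∪ σ) :
    extendLabel lab (outerVertex ε i) ≠ -extendLabel lab x := by
  have hε := hc.isSignVector
  rw [extendLabel_outerVertex hε]
  rcases mem_union.1 hx with hx | hx
  · obtain ⟨i', -, rfl⟩ := mem_outerChain.1 hx
    rw [extendLabel_outerVertex hε]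
    intro h
    have := congrFun h i
    rcases eq_or_ne i i' with rfl | hii
    · simp only [Pi.neg_apply, Pi.single_eq_same] at this
      exact hε.ne_zero i (by linarith)
    · simp [hii] at this
      exact hε.ne_zero i this
  · rw [extendLabel_of_l1norm_le (hc.subset_facet x hx).2.le]
    exact fun h => hc.lab_ne_neg_single hbdry hx i (by rw [h, neg_neg])

theorem exists_complementary_edge_of_mem_collarFaces (hK : K.space ⊆ octa n)
    (hbdry : SpernerBoundaryCondition K lab)
    {s : Finset (Fin n → ℝ)} (hs : s ∈ collarFaces K) {v₁ v₂ : Fin n → ℝ} (hv₁ : v₁ ∈ s)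
    (hv₂ : v₂ ∈ s) (h : extendLabel lab v₁ = -extendLabel lab v₂) :
    ∃ σ ∈ K.faces, ∃ v₁ ∈ σ, ∃ v₂ ∈ σ, lab v₁ = -lab v₂ := by
  obtain ⟨-, hs | ⟨ε, j, σ, hc, hsub⟩⟩ := hs
  · refine ⟨s, hs, v₁, hv₁, v₂, hv₂, ?_⟩
    rwa [extendLabel_of_l1norm_le (hK (K.subset_space hs hv₁)),
      extendLabel_of_l1norm_le (hK (K.subset_space hs hv₂))] at h
  rcases mem_union.1 (hsub hv₁) with h₁ | h₁
  · obtain ⟨i, -, rfl⟩ := mem_outerChain.1 h₁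
    exact absurd h (hc.extendLabel_outerVertex_ne_neg hbdry i (hsub hv₂))
  rcases mem_union.1 (hsub hv₂) with h₂ | h₂
  · obtain ⟨i, -, rfl⟩ := mem_outerChain.1 h₂
    exact absurd (neg_eq_iff_eq_neg.1 h.symm) (hc.extendLabel_outerVertex_ne_neg hbdry i (hsub hv₁))
  refine ⟨σ, hc.mem_faces ⟨v₁, h₁⟩, v₁, h₁, v₂, h₂, ?_⟩
  rwa [extendLabel_of_l1norm_le (hc.subset_facet v₁ h₁).2.le,
    extendLabel_of_l1norm_le (hc.subset_facet v₂ h₂).2.le] at h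

end Labels

end OctahedralCollar

open OctahedralCollar

/-- Tucker's lemma implies the Octahedral Sperner lemma with
Octahedral Labels. -/
theorem tucker_implies_octahedral_sperner :
    TuckerStatement → OctahedralSpernerStatement := by
  intro tucker n hn K hfin hK lab hlab hbdry
  obtain ⟨s, hs, v₁, hv₁, v₂, hv₂, h⟩ := tucker n hn (collar K hK.le) (collarFaces_finite hfin)
    (nonempty_homeomorph_collar_space hK)
    (fun s hs hfr => image_neg_mem_collarFaces hK.le hs fun v hv =>
      l1norm_eq_two_of_mem_frontier hK (hfr hv))
    (extendLabel lab) (fun v hv => extendLabel_mem_extOcta hK.le hlab hv)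
    (fun v _ hv => extendLabel_neg (l1norm_eq_two_of_mem_frontier hK hv))
  exact exists_complementary_edge_of_mem_collarFaces hK.le hbdry hs hv₁ hv₂ h
end
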